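/- There is a constant C, independent of h, k, n, epsilon^n and e^n, such that |(epsilon^n, P[(rho^n)_x]) + ((1 + H^n) e^n, P_0[(r^n)_x])| <= C (||epsilon^n||^2 + ||e^n||^2). -/

import Mathlib

open MeasureTheory Set

noncomputable section

/-- The L²(0,1) inner product. -/
def ip (f g : ℝ → ℝ) : ℝ := ∫ x in (0:ℝ)..1, f x * g x

/-- The L²(0,1) norm. -/
def L2 (f : ℝ → ℝ) : ℝ := Real.sqrt (ip f f)

/-- The L^∞(0,1) norm. -/
def Linf (f : ℝ → ℝ) : ℝ := sSup ((fun x => |f x|) '' Icc (0:ℝ) 1)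

/-- The H^s(0,1) Sobolev norm. -/
def Hs (s : ℕ) (f : ℝ → ℝ) : ℝ :=
  Real.sqrt (∑ j ∈ Finset.range (s + 1), (L2 (iteratedDeriv j f)) ^ 2)

/-- The W^{s,∞}(0,1) norm. -/
def Winf (s : ℕ) (f : ℝ → ℝ) : ℝ := ∑ j ∈ Finset.range (s + 1), Linf (iteratedDeriv j f)

/-- A quasiuniform partition of [0,1] with maximal mesh length `h` and
quasiuniformity constant `c`. -/
structure Disc (c : ℝ) where
  N : ℕ
  pt : Fin (N + 2) → ℝ
  h : ℝ
  h_pos : 0 < h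
  mono : StrictMono pt
  left : pt 0 = 0
  right : pt (Fin.last (N + 1)) = 1
  len_le : ∀ i : Fin (N + 1), pt i.succ - pt i.castSucc ≤ h
  quasi : ∀ i : Fin (N + 1), c * h ≤ pt i.succ - pt i.castSucc

/-- The finite element space S_h of C^μ piecewise polynomials of degree ≤ r-1. -/
def Sp (r μ : ℕ) {c : ℝ} (D : Disc c) : Set (ℝ → ℝ) :=
  {φ | ContDiffOn ℝ μ φ (Icc 0 1) ∧
    ∀ i : Fin (D.N + 1), ∃ p : Polynomial ℝ, p.natDegree ≤ r - 1 ∧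
      ∀ t ∈ Icc (D.pt i.castSucc) (D.pt i.succ), φ t = p.eval t}

/-- The finite element space S_{h,0} with zero boundary conditions. -/
def Sp0 (r μ : ℕ) {c : ℝ} (D : Disc c) : Set (ℝ → ℝ) :=
  {φ | φ ∈ Sp r μ D ∧ φ 0 = 0 ∧ φ 1 = 0}

/-- `P` is the L²(0,1)-orthogonal projection onto `S`. -/
def IsL2Proj (S : Set (ℝ → ℝ)) (P : (ℝ → ℝ) → (ℝ → ℝ)) : Prop :=
  (∀ v, P v ∈ S) ∧ (∀ v χ, χ ∈ S → ip (fun x => v x - P v x) χ = 0) ∧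
  (∀ χ ∈ S, P χ = χ)

/-- The projection bounds (2.3a)-(2.3c). -/
def ProjBounds (P : (ℝ → ℝ) → (ℝ → ℝ)) (r : ℕ) (h Cp : ℝ) : Prop :=
  (∀ v, DifferentiableOn ℝ v (Icc 0 1) → Hs 1 (P v) ≤ Cp * Hs 1 v) ∧
  (∀ v, ContinuousOn v (Icc 0 1) → Linf (P v) ≤ Cp * Linf v) ∧
  (∀ v, ContDiffOn ℝ r v (Icc 0 1) → Linf (fun x => P v x - v x) ≤ Cp * h ^ r * Winf r v)

/-- The projection bounds (2.3a)-(2.3c) for functions vanishing at the endpoints. -/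
def ProjBounds0 (P0 : (ℝ → ℝ) → (ℝ → ℝ)) (r : ℕ) (h Cp : ℝ) : Prop :=
  (∀ v, DifferentiableOn ℝ v (Icc 0 1) → v 0 = 0 → v 1 = 0 → Hs 1 (P0 v) ≤ Cp * Hs 1 v) ∧
  (∀ v, ContinuousOn v (Icc 0 1) → v 0 = 0 → v 1 = 0 → Linf (P0 v) ≤ Cp * Linf v) ∧
  (∀ v, ContDiffOn ℝ r v (Icc 0 1) → v 0 = 0 → v 1 = 0 →
      Linf (fun x => P0 v x - v x) ≤ Cp * h ^ r * Winf r v)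

/-- The approximation property (2.1a). -/
def ApproxProp (S : Set (ℝ → ℝ)) (r : ℕ) (h Ca : ℝ) : Prop :=
  ∀ s : ℕ, 2 ≤ s → s ≤ r → ∀ w : ℝ → ℝ, ContDiffOn ℝ s w (Icc 0 1) →
    ∃ χ ∈ S, L2 (fun x => w x - χ x) + h * L2 (fun x => deriv w x - deriv χ x)
      ≤ Ca * h ^ s * L2 (iteratedDeriv s w)

/-- The approximation property (2.1a) for functions vanishing at the endpoints. -/
def ApproxProp0 (S : Set (ℝ → ℝ)) (r : ℕ) (h Ca : ℝ) : Prop :=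
  ∀ s : ℕ, 2 ≤ s → s ≤ r → ∀ w : ℝ → ℝ, ContDiffOn ℝ s w (Icc 0 1) → w 0 = 0 → w 1 = 0 →
    ∃ χ ∈ S, L2 (fun x => w x - χ x) + h * L2 (fun x => deriv w x - deriv χ x)
      ≤ Ca * h ^ s * L2 (iteratedDeriv s w)

/-- The inverse inequalities (2.2). -/
def InvIneq (S : Set (ℝ → ℝ)) (μ : ℕ) (h Ci : ℝ) : Prop :=
  ∀ χ ∈ S,
    (∀ a b : ℕ, b ≤ a → a ≤ μ + 1 → Hs a χ ≤ Ci / h ^ (a - b) * Hs b χ) ∧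
    (∀ j : ℕ, j ≤ μ → Winf j χ ≤ Ci / (h ^ j * Real.sqrt h) * L2 χ)

/-- `(η, u)` is a (sufficiently) smooth solution of the shallow water system on
`[0,1] × [0,T]`, with `1 + η ≥ α` there and homogeneous Dirichlet conditions on `u`. -/
def SWSolution (T α : ℝ) (η u : ℝ → ℝ → ℝ) : Prop :=
  ContDiff ℝ (⊤ : ℕ∞) (Function.uncurry η) ∧ ContDiff ℝ (⊤ : ℕ∞) (Function.uncurry u) ∧
  (∀ t ∈ Icc (0:ℝ) T, ∀ x ∈ Icc (0:ℝ) 1,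
      deriv (fun s => η s x) t + deriv (fun y => u t y + η t y * u t y) x = 0) ∧
  (∀ t ∈ Icc (0:ℝ) T, ∀ x ∈ Icc (0:ℝ) 1,
      deriv (fun s => u s x) t + deriv (fun y => η t y) x
        + u t x * deriv (fun y => u t y) x = 0) ∧
  (∀ t ∈ Icc (0:ℝ) T, u t 0 = 0 ∧ u t 1 = 0) ∧
  (∀ t ∈ Icc (0:ℝ) T, ∀ x ∈ Icc (0:ℝ) 1, α ≤ 1 + η t x)

/-- The RK4 coefficients a_j. -/
def aRK : ℕ → ℝ
  | 1 => 1/2 | 2 => 1/2 | 3 => 1 | _ => 0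

/-- The RK4 coefficients b_j. -/
def bRK : ℕ → ℝ
  | 1 => 1/6 | 2 => 1/3 | 3 => 1/3 | 4 => 1/6 | _ => 0

/-- Φ = W + V·W for a pair of stages (V, W). -/
def PhiOf (VW : (ℝ → ℝ) × (ℝ → ℝ)) : ℝ → ℝ := fun x => VW.2 x + VW.1 x * VW.2 x

/-- F = V_x + W·W_x for a pair of stages (V, W). -/
def FOf (VW : (ℝ → ℝ) × (ℝ → ℝ)) : ℝ → ℝ := fun x => deriv VW.1 x + VW.2 x * deriv VW.2 x

/-- The RK4 intermediate stages (V^{n,j}, W^{n,j}) starting from (Hn, Un). -/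
def RKstage (P P0 : (ℝ → ℝ) → (ℝ → ℝ)) (k : ℝ) (Hn Un : ℝ → ℝ) : ℕ → (ℝ → ℝ) × (ℝ → ℝ)
  | 0 => (Hn, Un)
  | j + 1 =>
      ((fun x => Hn x - k * aRK (j + 1) * P (deriv (PhiOf (RKstage P P0 k Hn Un j))) x),
       (fun x => Un x - k * aRK (j + 1) * P0 (FOf (RKstage P P0 k Hn Un j)) x))

/-- One full RK4 time step. -/
def RKstep (P P0 : (ℝ → ℝ) → (ℝ → ℝ)) (k : ℝ) (HU : (ℝ → ℝ) × (ℝ → ℝ)) :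
    (ℝ → ℝ) × (ℝ → ℝ) :=
  ((fun x => HU.1 x - k * P (deriv (fun y =>
      ∑ j ∈ Finset.range 4, bRK (j + 1) * PhiOf (RKstage P P0 k HU.1 HU.2 j) y)) x),
   (fun x => HU.2 x - k * P0 (fun y =>
      ∑ j ∈ Finset.range 4, bRK (j + 1) * FOf (RKstage P P0 k HU.1 HU.2 j) y) x))

/-- The fully discrete RK4 solution (H_h^n, U_h^n). -/
def RKsol (P P0 : (ℝ → ℝ) → (ℝ → ℝ)) (k : ℝ) (H0 U0 : ℝ → ℝ) : ℕ → (ℝ → ℝ) × (ℝ → ℝ)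
  | 0 => (H0, U0)
  | n + 1 => RKstep P P0 k (RKsol P P0 k H0 U0 n)

/-- The spatial truncation error ψ = H_t + P[(U + HU)_x]. -/
def psiD (P P0 : (ℝ → ℝ) → (ℝ → ℝ)) (η u : ℝ → ℝ → ℝ) (t x : ℝ) : ℝ :=
  deriv (fun s => P (η s) x) t
    + P (deriv (fun y => P0 (u t) y + P (η t) y * P0 (u t) y)) x

/-- The spatial truncation error ζ = U_t + P_0[H_x + U U_x]. -/
def zetaD (P P0 : (ℝ → ℝ) → (ℝ → ℝ)) (η u : ℝ → ℝ → ℝ) (t x : ℝ) : ℝ :=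
  deriv (fun s => P0 (u s) x) t
    + P0 (fun y => deriv (P (η t)) y + P0 (u t) y * deriv (P0 (u t)) y) x

/-- The pairs (ρ^{n,j}, r^{n,j}), j = 0, 1, 2, 3, of Lemma 4.2. -/
def rhoPair (P P0 : (ℝ → ℝ) → (ℝ → ℝ)) (Hn Un eps e : ℝ → ℝ) : ℕ → (ℝ → ℝ) × (ℝ → ℝ)
  | 0 => ((fun x => (1 + Hn x) * e x + Un x * eps x), (fun x => eps x + Un x * e x))
  | j + 1 =>
      ((fun x => (1 + Hn x) * P0 (deriv (rhoPair P P0 Hn Un eps e j).2) x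
          + Un x * P (deriv (rhoPair P P0 Hn Un eps e j).1) x),
       (fun x => P (deriv (rhoPair P P0 Hn Un eps e j).1) x
          + Un x * P0 (deriv (rhoPair P P0 Hn Un eps e j).2) x))

/-- The pairs (ρ^{n,i}, r^{n,i}) for i = -1, 0, 1, 2, 3, where
ρ^{n,-1}(x) = ∫₀ˣ ε and r^{n,-1}(x) = ∫₀ˣ e. -/
def rhoPairZ (P P0 : (ℝ → ℝ) → (ℝ → ℝ)) (Hn Un eps e : ℝ → ℝ) (i : ℤ) :
    (ℝ → ℝ) × (ℝ → ℝ) :=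
  if i < 0 then ((fun x => ∫ t in (0:ℝ)..x, eps t), (fun x => ∫ t in (0:ℝ)..x, e t))
  else rhoPair P P0 Hn Un eps e i.toNat

/-- The quantity γ_i^{n,l} of Lemma 4.3 (with integer indices). -/
def gammaZ (P P0 : (ℝ → ℝ) → (ℝ → ℝ)) (Hn Un eps e : ℝ → ℝ) (i l : ℤ) : ℝ :=
  ip (fun x => deriv Un x * P (deriv (rhoPairZ P P0 Hn Un eps e i).1) x)
     (P (deriv (rhoPairZ P P0 Hn Un eps e l).1)) +
  ip (fun x => ((1 + Hn x) * deriv Un x - deriv Hn x * Un x)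
        * P0 (deriv (rhoPairZ P P0 Hn Un eps e i).2) x)
     (P0 (deriv (rhoPairZ P P0 Hn Un eps e l).2))

/-- The quantity γ_i^{n,l} of Lemma 4.3 (with natural number indices). -/
def gammaN (P P0 : (ℝ → ℝ) → (ℝ → ℝ)) (Hn Un eps e : ℝ → ℝ) (i l : ℕ) : ℝ :=
  ip (fun x => deriv Un x * P (deriv (rhoPair P P0 Hn Un eps e i).1) x)
     (P (deriv (rhoPair P P0 Hn Un eps e l).1)) +
  ip (fun x => ((1 + Hn x) * deriv Un x - deriv Hn x * Un x)
        * P0 (deriv (rhoPair P P0 Hn Un eps e i).2) x)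
     (P0 (deriv (rhoPair P P0 Hn Un eps e l).2))


namespace Aux


/-- measurable-on and bounded-on (0,1). -/
def Mb (f : ℝ → ℝ) : Prop :=
  AEStronglyMeasurable f (volume.restrict (Set.Ioc (0:ℝ) 1)) ∧
    ∃ K, ∀ x ∈ Set.Ioo (0:ℝ) 1, |f x| ≤ K

lemma ae_Ioo : ∀ᵐ x ∂(volume.restrict (Set.Ioc (0:ℝ) 1)), x ∈ Set.Ioo (0:ℝ) 1 := by
  have h1 : ∀ᵐ x ∂(volume.restrict (Set.Ioc (0:ℝ) 1)), x ∈ Set.Ioc (0:ℝ) 1 :=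
    ae_restrict_mem measurableSet_Ioc
  have h2 : ∀ᵐ (x : ℝ) ∂(volume.restrict (Set.Ioc (0:ℝ) 1)), x ≠ 1 := by
    refine ae_restrict_of_ae ?_
    have : volume ({(1:ℝ)} : Set ℝ) = 0 := measure_singleton 1
    rw [ae_iff]
    simpa using this
  filter_upwards [h1, h2] with x hx hne
  exact ⟨hx.1, lt_of_le_of_ne hx.2 hne⟩

lemma Mb.mul {f g : ℝ → ℝ} (hf : Mb f) (hg : Mb g) : Mb (fun x => f x * g x) := by
  obtain ⟨hfm, Kf, hKf⟩ := hf
  obtain ⟨hgm, Kg, hKg⟩ := hg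
  refine ⟨hfm.mul hgm, |Kf| * |Kg|, fun x hx => ?_⟩
  rw [abs_mul]
  exact mul_le_mul ((hKf x hx).trans (le_abs_self _)) ((hKg x hx).trans (le_abs_self _))
    (abs_nonneg _) (abs_nonneg _)

lemma Mb.add {f g : ℝ → ℝ} (hf : Mb f) (hg : Mb g) : Mb (fun x => f x + g x) := by
  obtain ⟨hfm, Kf, hKf⟩ := hf
  obtain ⟨hgm, Kg, hKg⟩ := hg
  exact ⟨hfm.add hgm, Kf + Kg, fun x hx =>
    (abs_add_le _ _).trans (add_le_add (hKf x hx) (hKg x hx))⟩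

lemma Mb.neg {f : ℝ → ℝ} (hf : Mb f) : Mb (fun x => -(f x)) := by
  obtain ⟨hfm, Kf, hKf⟩ := hf
  exact ⟨hfm.neg, Kf, fun x hx => by rw [abs_neg]; exact hKf x hx⟩

lemma Mb.sub {f g : ℝ → ℝ} (hf : Mb f) (hg : Mb g) : Mb (fun x => f x - g x) := by
  have := hf.add hg.neg
  simpa [sub_eq_add_neg] using this

lemma Mb.congr_Ioo {f g : ℝ → ℝ} (hf : Mb f) (h : ∀ x ∈ Set.Ioo (0:ℝ) 1, f x = g x) : Mb g := by
  obtain ⟨hfm, Kf, hKf⟩ := hf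
  refine ⟨hfm.congr ?_, Kf, fun x hx => (h x hx) ▸ hKf x hx⟩
  filter_upwards [ae_Ioo] with x hx using h x hx

lemma mb_const (c : ℝ) : Mb (fun _ => c) :=
  ⟨aestronglyMeasurable_const, |c|, fun _ _ => le_refl _⟩

lemma mb_of_continuousOn {f : ℝ → ℝ} (hf : ContinuousOn f (Set.Icc 0 1)) : Mb f := by
  obtain ⟨K, hK⟩ := (isCompact_Icc (a := (0:ℝ)) (b := 1)).exists_bound_of_continuousOn hf
  refine ⟨(hf.mono Set.Ioc_subset_Icc_self).aestronglyMeasurable measurableSet_Ioc,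
    K, fun x hx => ?_⟩
  simpa using hK x (Set.mem_Icc_of_Ioo hx)

lemma mb_of_meas {f : ℝ → ℝ} (hm : Measurable f) (K : ℝ)
    (hb : ∀ x ∈ Set.Ioo (0:ℝ) 1, |f x| ≤ K) : Mb f :=
  ⟨hm.aestronglyMeasurable, K, hb⟩

lemma Mb.intervalIntegrable {f : ℝ → ℝ} (hf : Mb f) : IntervalIntegrable f volume 0 1 := by
  obtain ⟨hfm, K, hK⟩ := hf
  rw [intervalIntegrable_iff, Set.uIoc_of_le (by norm_num : (0:ℝ) ≤ 1)]
  refine ⟨hfm, ?_⟩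
  refine MeasureTheory.HasFiniteIntegral.mono' (g := fun _ => K)
    (MeasureTheory.hasFiniteIntegral_const K) ?_
  filter_upwards [ae_Ioo] with x hx using by simpa using hK x hx

lemma integral01_eq (f : ℝ → ℝ) :
    (∫ x in (0:ℝ)..1, f x) = ∫ x in Set.Ioc (0:ℝ) 1, f x := by
  rw [intervalIntegral.integral_of_le (by norm_num : (0:ℝ) ≤ 1)]

lemma integral01_congr {f g : ℝ → ℝ} (h : ∀ x ∈ Set.Ioo (0:ℝ) 1, f x = g x) :
    (∫ x in (0:ℝ)..1, f x) = ∫ x in (0:ℝ)..1, g x := by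
  rw [integral01_eq, integral01_eq]
  refine integral_congr_ae ?_
  filter_upwards [ae_Ioo] with x hx using h x hx




lemma Mb.abs {f : ℝ → ℝ} (hf : Mb f) : Mb (fun x => |f x|) := by
  obtain ⟨hm, K, hK⟩ := hf
  exact ⟨hm.norm.congr (by filter_upwards with x; simp [Real.norm_eq_abs]), K,
    fun x hx => by simpa [abs_abs] using hK x hx⟩

lemma Mb.integrableOn {f : ℝ → ℝ} (hf : Mb f) :
    MeasureTheory.Integrable f (volume.restrict (Set.Ioc (0:ℝ) 1)) := by
  have := hf.intervalIntegrable
  rw [intervalIntegrable_iff, Set.uIoc_of_le (by norm_num : (0:ℝ) ≤ 1)] at this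
  exact this

lemma ip_self_nonneg (f : ℝ → ℝ) : 0 ≤ ip f f := by
  unfold ip
  apply intervalIntegral.integral_nonneg (by norm_num)
  intro x _; exact mul_self_nonneg _

lemma L2_nonneg (f : ℝ → ℝ) : 0 ≤ L2 f := Real.sqrt_nonneg _

lemma L2_sq (f : ℝ → ℝ) : L2 f ^ 2 = ip f f := Real.sq_sqrt (ip_self_nonneg f)

lemma ip_comm (f g : ℝ → ℝ) : ip f g = ip g f := by
  unfold ip; congr 1; ext x; ring

/-- Cauchy-Schwarz with absolute values. -/
lemma integral_abs_mul_le {f g : ℝ → ℝ} (hf : Mb f) (hg : Mb g) :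
    (∫ x in (0:ℝ)..1, |f x * g x|) ≤ L2 f * L2 g := by
  set A := ip f f with hA
  set C := ip g g with hC
  set B := (∫ x in (0:ℝ)..1, |f x * g x|) with hB
  have hint1 : IntervalIntegrable (fun x => f x * f x) volume 0 1 := (hf.mul hf).intervalIntegrable
  have hint2 : IntervalIntegrable (fun x => |f x * g x|) volume 0 1 :=
    (hf.mul hg).abs.intervalIntegrable
  have hint3 : IntervalIntegrable (fun x => g x * g x) volume 0 1 := (hg.mul hg).intervalIntegrable
  have key : ∀ t : ℝ, 0 ≤ C * (t * t) + (2 * B) * t + A := by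
    intro t
    have h0 : 0 ≤ ∫ x in (0:ℝ)..1, (|f x| + t * |g x|) * (|f x| + t * |g x|) :=
      intervalIntegral.integral_nonneg (by norm_num) (fun x _ => mul_self_nonneg _)
    have hexp : (∫ x in (0:ℝ)..1, (|f x| + t * |g x|) * (|f x| + t * |g x|))
        = A + (2*t) * B + (t*t) * C := by
      have hpt : ∀ x, (|f x| + t * |g x|) * (|f x| + t * |g x|)
          = f x * f x + (2*t) * |f x * g x| + (t*t) * (g x * g x) := by
        intro x
        have h1 : |f x| * |f x| = f x * f x := by rw [← abs_mul, abs_mul_self]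
        have h2 : |g x| * |g x| = g x * g x := by rw [← abs_mul, abs_mul_self]
        have h3 : |f x| * |g x| = |f x * g x| := (abs_mul _ _).symm
        calc (|f x| + t * |g x|) * (|f x| + t * |g x|)
            = |f x| * |f x| + (2*t) * (|f x| * |g x|) + (t*t) * (|g x| * |g x|) := by ring
          _ = f x * f x + (2*t) * |f x * g x| + (t*t) * (g x * g x) := by rw [h1, h2, h3]
      rw [integral01_congr (fun x _ => hpt x),
        intervalIntegral.integral_add (hint1.add (hint2.const_mul (2*t))) (hint3.const_mul (t*t)),
        intervalIntegral.integral_add hint1 (hint2.const_mul (2*t)),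
        intervalIntegral.integral_const_mul, intervalIntegral.integral_const_mul]
      rw [hA, hB, hC]
      unfold ip
      ring
    rw [hexp] at h0
    linarith
  have hd := discrim_le_zero key
  unfold discrim at hd
  have hB2 : B ^ 2 ≤ A * C := by nlinarith [hd]
  have hBnn : 0 ≤ B := by
    rw [hB]
    exact intervalIntegral.integral_nonneg (by norm_num) (fun x _ => abs_nonneg _)
  calc B = Real.sqrt (B ^ 2) := (Real.sqrt_sq hBnn).symm
    _ ≤ Real.sqrt (A * C) := Real.sqrt_le_sqrt hB2
    _ = Real.sqrt A * Real.sqrt C := Real.sqrt_mul (by rw [hA]; exact ip_self_nonneg f) _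
    _ = L2 f * L2 g := rfl

lemma abs_ip_le {f g : ℝ → ℝ} (hf : Mb f) (hg : Mb g) : |ip f g| ≤ L2 f * L2 g := by
  refine le_trans ?_ (integral_abs_mul_le hf hg)
  unfold ip
  exact intervalIntegral.abs_integral_le_integral_abs (by norm_num)

lemma L2_le_of_bound {f : ℝ → ℝ} {K : ℝ} (hK : 0 ≤ K) (hf : Mb f)
    (hb : ∀ x ∈ Set.Ioo (0:ℝ) 1, |f x| ≤ K) : L2 f ≤ K := by
  have h1 : ip f f ≤ K ^ 2 := by
    unfold ip
    calc (∫ x in (0:ℝ)..1, f x * f x) ≤ ∫ _x in (0:ℝ)..1, K ^ 2 := by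
          rw [intervalIntegral.integral_of_le (by norm_num : (0:ℝ) ≤ 1),
            intervalIntegral.integral_of_le (by norm_num : (0:ℝ) ≤ 1)]
          refine integral_mono_ae (hf.mul hf).integrableOn
            (integrableOn_const measure_Ioc_lt_top.ne) ?_
          filter_upwards [ae_Ioo] with x hx
          have h := hb x hx
          nlinarith [neg_abs_le (f x), le_abs_self (f x)]
      _ = K ^ 2 := by simp
  calc L2 f = Real.sqrt (ip f f) := rfl
    _ ≤ Real.sqrt (K ^ 2) := Real.sqrt_le_sqrt h1
    _ = K := Real.sqrt_sq hK

lemma L2_congr_Ioo {f g : ℝ → ℝ} (h : ∀ x ∈ Set.Ioo (0:ℝ) 1, f x = g x) : L2 f = L2 g := by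
  unfold L2 ip
  rw [integral01_congr (f := fun x => f x * f x) (g := fun x => g x * g x)
    (fun x hx => by simp only [h x hx])]

lemma L2_mul_le {c f : ℝ → ℝ} {K : ℝ} (hK : 0 ≤ K) (hc : Mb c) (hf : Mb f)
    (hb : ∀ x ∈ Set.Ioo (0:ℝ) 1, |c x| ≤ K) :
    L2 (fun x => c x * f x) ≤ K * L2 f := by
  have h1 : ip (fun x => c x * f x) (fun x => c x * f x) ≤ K ^ 2 * ip f f := by
    unfold ip
    rw [← intervalIntegral.integral_const_mul]
    rw [intervalIntegral.integral_of_le (by norm_num : (0:ℝ) ≤ 1),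
      intervalIntegral.integral_of_le (by norm_num : (0:ℝ) ≤ 1)]
    refine integral_mono_ae ((hc.mul hf).mul (hc.mul hf)).integrableOn
      ((hf.mul hf).integrableOn.const_mul _) ?_
    filter_upwards [ae_Ioo] with x hx
    have h := hb x hx
    have h2 : c x * c x ≤ K ^ 2 := by nlinarith [neg_abs_le (c x), le_abs_self (c x)]
    calc c x * f x * (c x * f x) = (c x * c x) * (f x * f x) := by ring
      _ ≤ K ^ 2 * (f x * f x) := mul_le_mul_of_nonneg_right h2 (mul_self_nonneg _)
  calc L2 (fun x => c x * f x) = Real.sqrt (ip _ _) := rfl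
    _ ≤ Real.sqrt (K ^ 2 * ip f f) := Real.sqrt_le_sqrt h1
    _ = K * L2 f := by
        rw [Real.sqrt_mul (sq_nonneg K), Real.sqrt_sq hK]; rfl

lemma L2_add_le {f g : ℝ → ℝ} (hf : Mb f) (hg : Mb g) :
    L2 (fun x => f x + g x) ≤ L2 f + L2 g := by
  have hfg : ip (fun x => f x + g x) (fun x => f x + g x)
      = ip f f + 2 * (∫ x in (0:ℝ)..1, f x * g x) + ip g g := by
    unfold ip
    rw [integral01_congr (g := fun x => f x * f x + 2 * (f x * g x) + g x * g x)
      (fun x _ => by simp only []; ring),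
      intervalIntegral.integral_add ((hf.mul hf).intervalIntegrable.add
        ((hf.mul hg).intervalIntegrable.const_mul 2)) (hg.mul hg).intervalIntegrable,
      intervalIntegral.integral_add (hf.mul hf).intervalIntegrable
        ((hf.mul hg).intervalIntegrable.const_mul 2),
      intervalIntegral.integral_const_mul]
  have hcs : (∫ x in (0:ℝ)..1, f x * g x) ≤ L2 f * L2 g :=
    le_trans (le_abs_self _) (abs_ip_le hf hg)
  have h2 : ip (fun x => f x + g x) (fun x => f x + g x) ≤ (L2 f + L2 g) ^ 2 := by
    rw [hfg]
    have e1 := L2_sq f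
    have e2 := L2_sq g
    nlinarith [hcs]
  calc L2 (fun x => f x + g x) = Real.sqrt (ip _ _) := rfl
    _ ≤ Real.sqrt ((L2 f + L2 g) ^ 2) := Real.sqrt_le_sqrt h2
    _ = L2 f + L2 g := Real.sqrt_sq (add_nonneg (L2_nonneg f) (L2_nonneg g))

lemma L2_neg (f : ℝ → ℝ) : L2 (fun x => -(f x)) = L2 f := by
  unfold L2 ip
  congr 1
  refine integral01_congr (fun x _ => by simp only []; ring)

lemma Mb.neg' {f : ℝ → ℝ} (hf : Mb f) : Mb (fun x => -(f x)) := by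
  obtain ⟨hm, K, hK⟩ := hf
  exact ⟨hm.neg, K, fun x hx => by rw [abs_neg]; exact hK x hx⟩

lemma L2_sub_le {f g : ℝ → ℝ} (hf : Mb f) (hg : Mb g) :
    L2 (fun x => f x - g x) ≤ L2 f + L2 g := by
  have he : (fun x => f x - g x) = fun x => f x + -(g x) := by ext x; ring
  rw [he]
  calc L2 (fun x => f x + -g x) ≤ L2 f + L2 (fun x => -(g x)) := L2_add_le hf hg.neg'
    _ = L2 f + L2 g := by rw [L2_neg]

/-- weighted Cauchy-Schwarz -/
lemma abs_integral_cfg_le {c f g : ℝ → ℝ} {K : ℝ} (hK : 0 ≤ K) (hc : Mb c) (hf : Mb f)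
    (hg : Mb g) (hb : ∀ x ∈ Set.Ioo (0:ℝ) 1, |c x| ≤ K) :
    |∫ x in (0:ℝ)..1, c x * f x * g x| ≤ K * (L2 f * L2 g) := by
  have h1 : |∫ x in (0:ℝ)..1, c x * f x * g x| ≤ ∫ x in (0:ℝ)..1, |c x * f x * g x| :=
    intervalIntegral.abs_integral_le_integral_abs (by norm_num)
  have h2 : (∫ x in (0:ℝ)..1, |c x * f x * g x|) ≤ ∫ x in (0:ℝ)..1, K * |f x * g x| := by
    rw [intervalIntegral.integral_of_le (by norm_num : (0:ℝ) ≤ 1),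
      intervalIntegral.integral_of_le (by norm_num : (0:ℝ) ≤ 1)]
    refine integral_mono_ae ((hc.mul hf).mul hg).abs.integrableOn
      (((hf.mul hg).abs.integrableOn).const_mul K) ?_
    filter_upwards [ae_Ioo] with x hx
    calc |c x * f x * g x| = |c x| * |f x * g x| := by rw [mul_assoc, abs_mul]
      _ ≤ K * |f x * g x| := mul_le_mul_of_nonneg_right (hb x hx) (abs_nonneg _)
  have h3 : (∫ x in (0:ℝ)..1, K * |f x * g x|) = K * ∫ x in (0:ℝ)..1, |f x * g x| :=
    intervalIntegral.integral_const_mul _ _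
  calc |∫ x in (0:ℝ)..1, c x * f x * g x| ≤ ∫ x in (0:ℝ)..1, |c x * f x * g x| := h1
    _ ≤ ∫ x in (0:ℝ)..1, K * |f x * g x| := h2
    _ = K * ∫ x in (0:ℝ)..1, |f x * g x| := h3
    _ ≤ K * (L2 f * L2 g) := mul_le_mul_of_nonneg_left (integral_abs_mul_le hf hg) hK



/-- pointwise bound by Linf for continuous functions -/
lemma le_Linf {f : ℝ → ℝ} (hf : ContinuousOn f (Set.Icc 0 1)) {x : ℝ}
    (hx : x ∈ Set.Icc (0:ℝ) 1) : |f x| ≤ Linf f := by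
  refine le_csSup ?_ (Set.mem_image_of_mem _ hx)
  have : IsCompact ((fun x => |f x|) '' Set.Icc (0:ℝ) 1) :=
    (isCompact_Icc).image_of_continuousOn (hf.abs)
  exact this.bddAbove

lemma Linf_le {f : ℝ → ℝ} {K : ℝ} (h : ∀ x ∈ Set.Icc (0:ℝ) 1, |f x| ≤ K) : Linf f ≤ K := by
  refine csSup_le ?_ ?_
  · exact (Set.nonempty_Icc.mpr (by norm_num)).image _
  · rintro y ⟨x, hx, rfl⟩
    exact h x hx

lemma Linf_nonneg {f : ℝ → ℝ} (hf : ContinuousOn f (Set.Icc 0 1)) : 0 ≤ Linf f :=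
  le_trans (abs_nonneg _) (le_Linf hf (by norm_num : (0:ℝ) ∈ Set.Icc (0:ℝ) 1))

/-- FTC wrapper: integral of the derivative-expression vanishes when Φ(0)=Φ(1). -/
lemma integral_DPhi_eq_zero {Φ DΦ : ℝ → ℝ} (hcont : ContinuousOn Φ (Set.Icc 0 1))
    (hderiv : ∀ x ∈ Set.Ioo (0:ℝ) 1, HasDerivAt Φ (DΦ x) x)
    (hint : IntervalIntegrable DΦ volume 0 1)
    (h0 : Φ 0 = 0) (h1 : Φ 1 = 0) :
    (∫ x in (0:ℝ)..1, DΦ x) = 0 := by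
  have := intervalIntegral.integral_eq_sub_of_hasDeriv_right_of_le (by norm_num : (0:ℝ) ≤ 1)
    hcont (fun x hx => (hderiv x hx).hasDerivWithinAt) hint
  rw [this, h0, h1, sub_zero]

/-- partial x-derivatives of a smooth function of two variables are smooth -/
lemma smooth_partial {F : ℝ → ℝ → ℝ} (hF : ContDiff ℝ ((⊤:ℕ∞) : WithTop ℕ∞) (Function.uncurry F)) (j : ℕ) :
    ContDiff ℝ ((⊤:ℕ∞) : WithTop ℕ∞) (fun p : ℝ × ℝ => iteratedDeriv j (F p.1) p.2) := by
  induction j with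
  | zero =>
      simp only [iteratedDeriv_zero]; exact hF
  | succ j ih =>
      have key : ∀ p : ℝ × ℝ, iteratedDeriv (j+1) (F p.1) p.2
          = (fderiv ℝ (fun q : ℝ × ℝ => iteratedDeriv j (F q.1) q.2) p) (0, 1) := by
        intro p
        rw [iteratedDeriv_succ]
        have hcur : ∀ y, iteratedDeriv j (F p.1) y
            = (fun q : ℝ × ℝ => iteratedDeriv j (F q.1) q.2) (p.1, y) := by intro y; rfl
        have hdiff : DifferentiableAt ℝ (fun q : ℝ × ℝ => iteratedDeriv j (F q.1) q.2) (p.1, p.2) :=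
          (ih.differentiable (by simp)).differentiableAt
        have hline : HasDerivAt (fun y => (p.1, y)) ((0:ℝ), (1:ℝ)) p.2 := by
          have := ((hasDerivAt_id p.2).const_mul (1:ℝ))
          refine HasDerivAt.prodMk (f₁' := 0) ?_ ?_
          · exact hasDerivAt_const _ _
          · exact hasDerivAt_id' p.2
        have hcomp := (hdiff.hasFDerivAt.comp_hasDerivAt p.2 hline)
        have : deriv (iteratedDeriv j (F p.1)) p.2
            = (fderiv ℝ (fun q : ℝ × ℝ => iteratedDeriv j (F q.1) q.2) (p.1, p.2)) (0, 1) := by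
          have heq : (iteratedDeriv j (F p.1))
              = (fun q : ℝ × ℝ => iteratedDeriv j (F q.1) q.2) ∘ (fun y => (p.1, y)) := rfl
          rw [heq]
          exact hcomp.deriv
        exact this
      have hsm : ContDiff ℝ ((⊤:ℕ∞) : WithTop ℕ∞) (fun p : ℝ × ℝ =>
          (fderiv ℝ (fun q : ℝ × ℝ => iteratedDeriv j (F q.1) q.2) p) (0, 1)) := by
        have h1 : ContDiff ℝ ((⊤:ℕ∞) : WithTop ℕ∞)
            (fderiv ℝ (fun q : ℝ × ℝ => iteratedDeriv j (F q.1) q.2)) :=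
          (contDiff_infty_iff_fderiv.mp ih).2
        exact h1.clm_apply contDiff_const
      have hfe : (fun p : ℝ × ℝ => iteratedDeriv (j+1) (F p.1) p.2)
          = fun p : ℝ × ℝ => (fderiv ℝ (fun q : ℝ × ℝ => iteratedDeriv j (F q.1) q.2) p) (0, 1) :=
        funext key
      rw [hfe]
      exact hsm



/-- all the facts we need about a C^1-on-[0,1] piecewise function -/
lemma spline_facts {φ : ℝ → ℝ} {μ : ℕ} (hμ : 1 ≤ μ) (hφ : ContDiffOn ℝ μ φ (Set.Icc 0 1)) :
    ContinuousOn φ (Set.Icc 0 1) ∧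
    (∀ x ∈ Set.Ioo (0:ℝ) 1, HasDerivAt φ (deriv φ x) x) ∧
    (∃ K, 0 ≤ K ∧ (∀ x ∈ Set.Icc (0:ℝ) 1, |φ x| ≤ K) ∧
      (∀ x ∈ Set.Ioo (0:ℝ) 1, |deriv φ x| ≤ K)) ∧
    Mb φ ∧ Mb (deriv φ) := by
  have hcont : ContinuousOn φ (Set.Icc 0 1) := hφ.continuousOn
  have h1 : (1 : WithTop ℕ∞) ≤ ((μ:ℕ∞) : WithTop ℕ∞) := by exact_mod_cast hμ
  have hdiff : DifferentiableOn ℝ φ (Set.Icc 0 1) := hφ.differentiableOn (by exact_mod_cast (show μ ≠ 0 by omega))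
  have hder : ∀ x ∈ Set.Ioo (0:ℝ) 1, HasDerivAt φ (deriv φ x) x := by
    intro x hx
    have hmem : Set.Icc (0:ℝ) 1 ∈ nhds x := Icc_mem_nhds hx.1 hx.2
    have := (hdiff x (Set.mem_Icc_of_Ioo hx)).differentiableAt hmem
    exact this.hasDerivAt
  have hdw : ContinuousOn (derivWithin φ (Set.Icc 0 1)) (Set.Icc 0 1) :=
    hφ.continuousOn_derivWithin (uniqueDiffOn_Icc (by norm_num)) h1
  have heq : ∀ x ∈ Set.Ioo (0:ℝ) 1, derivWithin φ (Set.Icc 0 1) x = deriv φ x := by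
    intro x hx
    exact derivWithin_of_mem_nhds (Icc_mem_nhds hx.1 hx.2)
  obtain ⟨K1, hK1⟩ := (isCompact_Icc (a := (0:ℝ)) (b := 1)).exists_bound_of_continuousOn hcont
  obtain ⟨K2, hK2⟩ := (isCompact_Icc (a := (0:ℝ)) (b := 1)).exists_bound_of_continuousOn hdw
  refine ⟨hcont, hder, ⟨|K1| + |K2|, by positivity, ?_, ?_⟩, mb_of_continuousOn hcont, ?_⟩
  · intro x hx
    calc |φ x| ≤ K1 := by simpa using hK1 x hx
      _ ≤ |K1| + |K2| := by cases abs_cases K1 <;> cases abs_cases K2 <;> linarith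
  · intro x hx
    rw [← heq x hx]
    calc |derivWithin φ (Set.Icc 0 1) x| ≤ K2 := by simpa using hK2 x (Set.mem_Icc_of_Ioo hx)
      _ ≤ |K1| + |K2| := by cases abs_cases K1 <;> cases abs_cases K2 <;> linarith
  · refine mb_of_meas (measurable_deriv φ) (|K1| + |K2|) ?_
    intro x hx
    rw [← heq x hx]
    calc |derivWithin φ (Set.Icc 0 1) x| ≤ K2 := by simpa using hK2 x (Set.mem_Icc_of_Ioo hx)
      _ ≤ |K1| + |K2| := by cases abs_cases K1 <;> cases abs_cases K2 <;> linarith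

/-- uniform bound for a continuous function of two variables on [0,T]×[0,1] -/
lemma bound_on_rect {G : ℝ × ℝ → ℝ} (hG : Continuous G) (T : ℝ) :
    ∃ K, 0 ≤ K ∧ ∀ t ∈ Set.Icc (0:ℝ) T, ∀ x ∈ Set.Icc (0:ℝ) 1, |G (t, x)| ≤ K := by
  obtain ⟨K, hK⟩ := ((isCompact_Icc (a := (0:ℝ)) (b := T)).prod
    (isCompact_Icc (a := (0:ℝ)) (b := 1))).exists_bound_of_continuousOn hG.continuousOn
  refine ⟨|K|, abs_nonneg _, fun t ht x hx => ?_⟩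
  calc |G (t, x)| ≤ K := by simpa using hK (t, x) (Set.mk_mem_prod ht hx)
    _ ≤ |K| := le_abs_self K



lemma smooth_slice {F : ℝ → ℝ → ℝ} (hF : ContDiff ℝ (⊤ : ℕ∞) (Function.uncurry F)) (t : ℝ) :
    ContDiff ℝ ((⊤:ℕ∞) : WithTop ℕ∞) (F t) := by
  have he : F t = (Function.uncurry F) ∘ (fun x => (t, x)) := rfl
  rw [he]
  exact (hF.of_le (by simp)).comp (contDiff_prodMk_right t)

lemma smooth_hasDerivAt {F : ℝ → ℝ → ℝ} (hF : ContDiff ℝ (⊤ : ℕ∞) (Function.uncurry F)) (t x : ℝ) :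
    HasDerivAt (F t) (deriv (F t) x) x :=
  (((smooth_slice hF t).differentiable (by simp)) x).hasDerivAt

lemma iter_bound {F : ℝ → ℝ → ℝ} (hF : ContDiff ℝ (⊤ : ℕ∞) (Function.uncurry F)) (T : ℝ) (j : ℕ) :
    ∃ K, 0 ≤ K ∧ ∀ t ∈ Set.Icc (0:ℝ) T, ∀ x ∈ Set.Icc (0:ℝ) 1,
      |iteratedDeriv j (F t) x| ≤ K := by
  have hsm := smooth_partial (hF.of_le (by simp)) j
  exact bound_on_rect hsm.continuous T

lemma Winf_bound {F : ℝ → ℝ → ℝ} (hF : ContDiff ℝ (⊤ : ℕ∞) (Function.uncurry F)) (T : ℝ) (r : ℕ) :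
    ∃ K, 0 ≤ K ∧ ∀ t ∈ Set.Icc (0:ℝ) T, Winf r (F t) ≤ K := by
  have hj := fun j => iter_bound hF T j
  choose Kf hKf0 hKf using hj
  refine ⟨∑ j ∈ Finset.range (r+1), Kf j, Finset.sum_nonneg (fun j _ => hKf0 j), fun t ht => ?_⟩
  unfold Winf
  exact Finset.sum_le_sum (fun j _ => Linf_le (fun x hx => hKf j t ht x hx))

lemma val_deriv_bound {F : ℝ → ℝ → ℝ} (hF : ContDiff ℝ (⊤ : ℕ∞) (Function.uncurry F)) (T : ℝ) :
    ∃ K, 0 ≤ K ∧ ∀ t ∈ Set.Icc (0:ℝ) T, ∀ x ∈ Set.Icc (0:ℝ) 1,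
      |F t x| ≤ K ∧ |deriv (F t) x| ≤ K := by
  obtain ⟨K0, hK00, hK0⟩ := iter_bound hF T 0
  obtain ⟨K1, hK10, hK1⟩ := iter_bound hF T 1
  refine ⟨K0 + K1, by linarith, fun t ht x hx => ⟨?_, ?_⟩⟩
  · have := hK0 t ht x hx; rw [iteratedDeriv_zero] at this; linarith
  · have := hK1 t ht x hx; rw [iteratedDeriv_one] at this; linarith

lemma Hs1_bound {F : ℝ → ℝ → ℝ} (hF : ContDiff ℝ (⊤ : ℕ∞) (Function.uncurry F)) (T : ℝ) :
    ∃ K, 0 ≤ K ∧ ∀ t ∈ Set.Icc (0:ℝ) T, Hs 1 (F t) ≤ K := by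
  obtain ⟨K, hK0, hK⟩ := val_deriv_bound hF T
  refine ⟨K + K, by linarith, fun t ht => ?_⟩
  have hL0 : L2 (F t) ≤ K :=
    L2_le_of_bound hK0 (mb_of_continuousOn ((smooth_slice hF t).continuous.continuousOn))
      (fun x hx => (hK t ht x (Set.mem_Icc_of_Ioo hx)).1)
  have hcd : Continuous (deriv (F t)) := (smooth_slice hF t).continuous_deriv (by exact_mod_cast le_top)
  have hL1 : L2 (deriv (F t)) ≤ K :=
    L2_le_of_bound hK0 (mb_of_continuousOn hcd.continuousOn)
      (fun x hx => (hK t ht x (Set.mem_Icc_of_Ioo hx)).2)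
  unfold Hs
  rw [show (1:ℕ) + 1 = 2 from rfl]
  rw [Finset.sum_range_succ, Finset.sum_range_one, iteratedDeriv_zero, iteratedDeriv_one]
  have n0 : 0 ≤ L2 (F t) := by unfold L2; exact Real.sqrt_nonneg _
  have n1 : 0 ≤ L2 (deriv (F t)) := by unfold L2; exact Real.sqrt_nonneg _
  have h1 : L2 (F t) ^ 2 + L2 (deriv (F t)) ^ 2 ≤ (K + K) ^ 2 := by nlinarith
  calc Real.sqrt (L2 (F t) ^ 2 + L2 (deriv (F t)) ^ 2) ≤ Real.sqrt ((K + K) ^ 2) :=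
        Real.sqrt_le_sqrt h1
    _ = K + K := Real.sqrt_sq (by linarith)



lemma Hs0_eq (f : ℝ → ℝ) : Hs 0 f = L2 f := by
  unfold Hs
  rw [Finset.sum_range_one, iteratedDeriv_zero, Real.sqrt_sq (L2_nonneg f)]

lemma L2_deriv_le_Hs1 (f : ℝ → ℝ) : L2 (deriv f) ≤ Hs 1 f := by
  unfold Hs
  rw [show (1:ℕ) + 1 = 2 from rfl, Finset.sum_range_succ, Finset.sum_range_one,
    iteratedDeriv_zero, iteratedDeriv_one]
  calc L2 (deriv f) = Real.sqrt (L2 (deriv f) ^ 2) := (Real.sqrt_sq (L2_nonneg _)).symm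
    _ ≤ Real.sqrt (L2 f ^ 2 + L2 (deriv f) ^ 2) :=
        Real.sqrt_le_sqrt (by nlinarith [sq_nonneg (L2 f)])

lemma Winf0_eq (f : ℝ → ℝ) : Winf 0 f = Linf f := by
  unfold Winf
  rw [Finset.sum_range_one, iteratedDeriv_zero]

/-- swap projection in an inner product against a test function -/
lemma ip_proj_eq {v Pv χ : ℝ → ℝ} (hv : Mb v) (hPv : Mb Pv) (hχ : Mb χ)
    (h : ip (fun x => v x - Pv x) χ = 0) : ip χ Pv = ip χ v := by
  unfold ip at h ⊢
  have hsplit : (∫ x in (0:ℝ)..1, (v x - Pv x) * χ x)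
      = (∫ x in (0:ℝ)..1, χ x * v x) - ∫ x in (0:ℝ)..1, χ x * Pv x := by
    rw [← intervalIntegral.integral_sub (hχ.mul hv).intervalIntegrable
      (hχ.mul hPv).intervalIntegrable]
    exact integral01_congr (fun x _ => by ring)
  rw [hsplit] at h
  linarith

/-- the L² projection is an L² contraction -/
lemma L2_proj_le {v Pv : ℝ → ℝ} (hv : Mb v) (hPv : Mb Pv)
    (h : ip (fun x => v x - Pv x) Pv = 0) : L2 Pv ≤ L2 v := by
  have h1 : ip Pv Pv = ip Pv v := ip_proj_eq hv hPv hPv h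
  have h2 : |ip Pv v| ≤ L2 Pv * L2 v := abs_ip_le hPv hv
  have h3 : L2 Pv ^ 2 ≤ L2 Pv * L2 v := by
    rw [L2_sq, h1]
    exact le_trans (le_abs_self _) h2
  nlinarith [L2_nonneg Pv, L2_nonneg v]


-- axioms standing for the already-proven helpers
lemma abs_add8 (a1 a2 a3 a4 a5 a6 a7 a8 : ℝ) :
    |a1+a2+a3+a4+a5+a6+a7+a8| ≤ |a1|+|a2|+|a3|+|a4|+|a5|+|a6|+|a7|+|a8| := by
  calc |a1+a2+a3+a4+a5+a6+a7+a8| ≤ |a1+a2+a3+a4+a5+a6+a7| + |a8| := abs_add_le _ _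
    _ ≤ (|a1+a2+a3+a4+a5+a6| + |a7|) + |a8| := by linarith [abs_add_le (a1+a2+a3+a4+a5+a6) a7]
    _ ≤ ((|a1+a2+a3+a4+a5| + |a6|) + |a7|) + |a8| := by linarith [abs_add_le (a1+a2+a3+a4+a5) a6]
    _ ≤ (((|a1+a2+a3+a4| + |a5|) + |a6|) + |a7|) + |a8| := by linarith [abs_add_le (a1+a2+a3+a4) a5]
    _ ≤ ((((|a1+a2+a3| + |a4|) + |a5|) + |a6|) + |a7|) + |a8| := by
        linarith [abs_add_le (a1+a2+a3) a4]
    _ ≤ (((((|a1+a2| + |a3|) + |a4|) + |a5|) + |a6|) + |a7|) + |a8| := by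
        linarith [abs_add_le (a1+a2) a3]
    _ ≤ |a1|+|a2|+|a3|+|a4|+|a5|+|a6|+|a7|+|a8| := by linarith [abs_add_le a1 a2]

set_option maxHeartbeats 2000000 in
/-- The core analytical estimate. -/
theorem core
    (eps e H U un ηn Pρ Pr gχ : ℝ → ℝ)
    (h cb Ci' Cs' CH CU MUC MHC LH LU Ku Kv : ℝ) (r : ℕ)
    (hr : 3 ≤ r) (hh0 : 0 < h) (hhcb : h ≤ cb) (hcb1 : 1 ≤ cb)
    (hCi'1 : 1 ≤ Ci') (hCs'0 : 0 ≤ Cs') (hCH0 : 0 ≤ CH) (hCU0 : 0 ≤ CU)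
    (hMUC0 : 0 ≤ MUC) (hMHC0 : 0 ≤ MHC) (hLH0 : 0 ≤ LH) (hLU0 : 0 ≤ LU)
    (hKu0 : 0 ≤ Ku) (hKv0 : 0 ≤ Kv)
    -- spline-type facts
    (hεc : ContinuousOn eps (Icc 0 1)) (hεd : ∀ x ∈ Ioo (0:ℝ) 1, HasDerivAt eps (deriv eps x) x)
    (hKε : ∃ K, 0 ≤ K ∧ (∀ x ∈ Icc (0:ℝ) 1, |eps x| ≤ K) ∧ (∀ x ∈ Ioo (0:ℝ) 1, |deriv eps x| ≤ K))
    (mε : Mb eps) (mdε : Mb (deriv eps))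
    (hec : ContinuousOn e (Icc 0 1)) (hed : ∀ x ∈ Ioo (0:ℝ) 1, HasDerivAt e (deriv e x) x)
    (hKe : ∃ K, 0 ≤ K ∧ (∀ x ∈ Icc (0:ℝ) 1, |e x| ≤ K) ∧ (∀ x ∈ Ioo (0:ℝ) 1, |deriv e x| ≤ K))
    (me : Mb e) (mde : Mb (deriv e))
    (hHc : ContinuousOn H (Icc 0 1)) (hHd : ∀ x ∈ Ioo (0:ℝ) 1, HasDerivAt H (deriv H x) x)
    (hKH : ∃ K, 0 ≤ K ∧ (∀ x ∈ Icc (0:ℝ) 1, |H x| ≤ K) ∧ (∀ x ∈ Ioo (0:ℝ) 1, |deriv H x| ≤ K))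
    (mH : Mb H) (mdH : Mb (deriv H))
    (hUc : ContinuousOn U (Icc 0 1)) (hUd : ∀ x ∈ Ioo (0:ℝ) 1, HasDerivAt U (deriv U x) x)
    (hKU : ∃ K, 0 ≤ K ∧ (∀ x ∈ Icc (0:ℝ) 1, |U x| ≤ K) ∧ (∀ x ∈ Ioo (0:ℝ) 1, |deriv U x| ≤ K))
    (mU : Mb U) (mdU : Mb (deriv U))
    -- smooth-function facts
    (hunc : Continuous un) (hund : ∀ x : ℝ, HasDerivAt un (deriv un x) x)
    (mun : Mb un) (mdun : Mb (deriv un))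
    (hbu : ∀ x ∈ Icc (0:ℝ) 1, |un x| ≤ Ku ∧ |deriv un x| ≤ Ku)
    (hηnc : Continuous ηn) (hηnd : ∀ x : ℝ, HasDerivAt ηn (deriv ηn x) x)
    (mηn : Mb ηn) (mdηn : Mb (deriv ηn))
    (hbη : ∀ x ∈ Icc (0:ℝ) 1, |ηn x| ≤ Kv ∧ |deriv ηn x| ≤ Kv)
    -- boundary conditions
    (he0 : e 0 = 0) (he1 : e 1 = 0) (hU0 : U 0 = 0) (hU1 : U 1 = 0)
    (hun0 : un 0 = 0) (hun1 : un 1 = 0)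
    -- norm estimates
    (f1 : L2 (deriv eps) ≤ Ci' / h * L2 eps)
    (f2 : L2 (deriv e) ≤ Ci' / h * L2 e)
    (f3 : ∀ x ∈ Icc (0:ℝ) 1, |e x| ≤ Ci' / Real.sqrt h * L2 e)
    (f4 : ∀ x ∈ Icc (0:ℝ) 1, |H x| ≤ CH)
    (f5 : ∀ x ∈ Icc (0:ℝ) 1, |U x| ≤ CU)
    (f6 : ∀ x ∈ Icc (0:ℝ) 1, |U x - un x| ≤ MUC * h ^ r)
    (f7 : ∀ x ∈ Icc (0:ℝ) 1, |H x - ηn x| ≤ MHC * h ^ r)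
    (f8 : L2 (deriv H) ≤ LH) (f9 : L2 (deriv U) ≤ LU)
    (fsa : L2 (fun x => gχ x - (1 + ηn x) * e x) ≤ Cs' * h * L2 e)
    -- projection facts
    (mPρ : Mb Pρ) (mPr : Mb Pr) (mgχ : Mb gχ)
    (o1 : ip (fun x => deriv (fun y => (1 + H y) * e y + U y * eps y) x - Pρ x) eps = 0)
    (o2 : ip (fun x => deriv (fun y => eps y + U y * e y) x - Pr x) gχ = 0)
    (o3 : ip (fun x => deriv (fun y => eps y + U y * e y) x - Pr x) Pr = 0) :
    |ip eps Pρ + ip (fun x => (1 + H x) * e x) Pr|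
      ≤ (Ku/2 + MUC*Ci'*cb^(r-1)
        + ((1/2)*(1+CH)*Ku + (1/2)*(MUC*Ci'*LH)*cb^r + MUC*(1+CH)*Ci'*cb^(r-1))
        + ((1/2)*Kv*CU + (1/2)*(MHC*Ci'*LU)*cb^r + MHC*CU*Ci'*cb^(r-1))
        + ((Cs' + MHC*cb^(r-1))*Ci' + 2*(Cs' + MHC*cb^(r-1))*LU*Ci'*cb
           + 2*(Cs' + MHC*cb^(r-1))*CU*Ci'))
        * ((L2 eps)^2 + (L2 e)^2) := by
  obtain ⟨Kε, hKε0, hKεv, hKεd⟩ := hKε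
  obtain ⟨Ke, hKe0, hKev, hKed⟩ := hKe
  obtain ⟨KH, hKH0, hKHv, hKHd⟩ := hKH
  obtain ⟨KU, hKU0, hKUv, hKUd⟩ := hKU
  have hCi'0 : (0:ℝ) < Ci' := lt_of_lt_of_le one_pos hCi'1
  have hcb0 : (0:ℝ) < cb := lt_of_lt_of_le one_pos hcb1
  set X := L2 eps with hX
  set Y := L2 e with hY
  have hX0 : 0 ≤ X := L2_nonneg eps
  have hY0 : 0 ≤ Y := L2_nonneg e
  set s := Real.sqrt h with hsdef
  have hs0 : 0 < s := Real.sqrt_pos.mpr hh0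
  have hss : s * s = h := Real.mul_self_sqrt hh0.le
  have hscb : s ≤ cb := by
    have h2 : cb ≤ cb^2 := by
      calc cb = 1*cb := (one_mul cb).symm
        _ ≤ cb*cb := mul_le_mul_of_nonneg_right hcb1 hcb0.le
        _ = cb^2 := (sq cb).symm
    have h1 : s ≤ Real.sqrt (cb^2) := Real.sqrt_le_sqrt (le_trans hhcb h2)
    rwa [Real.sqrt_sq hcb0.le] at h1
  have hrpow : h ^ r = h ^ (r-1) * h := by
    rw [← pow_succ]
    congr 1
    omega
  have hcbpow : cb ^ r = cb ^ (r-1) * cb := by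
    rw [← pow_succ]
    congr 1
    omega
  have hq' : h ^ (r-1) ≤ cb ^ (r-1) := pow_le_pow_left₀ hh0.le hhcb _
  have hq : h ^ r / s ≤ cb ^ r := by
    have h1 : h ^ r / s = h ^ (r-1) * s := by
      rw [hrpow]
      field_simp
      rw [sq, hss]
    rw [h1, hcbpow]
    exact mul_le_mul hq' hscb hs0.le (pow_nonneg hcb0.le _)
  have hqr : h ^ r ≤ cb ^ (r-1) * h := by
    rw [hrpow]
    exact mul_le_mul_of_nonneg_right hq' hh0.le
  set ρ : ℝ → ℝ := fun y => (1 + H y) * e y + U y * eps y with hρdef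
  set rr : ℝ → ℝ := fun y => eps y + U y * e y with hrrdef
  set w : ℝ → ℝ := fun x => (1 + H x) * e x with hwdef
  set Dρ : ℝ → ℝ := fun x =>
    deriv H x * e x + (1 + H x) * deriv e x + (deriv U x * eps x + U x * deriv eps x) with hDρdef
  set Dr : ℝ → ℝ := fun x => deriv eps x + (deriv U x * e x + U x * deriv e x) with hDrdef
  have hρd : ∀ x ∈ Ioo (0:ℝ) 1, HasDerivAt ρ (Dρ x) x := by
    intro x hx
    have hcomb := (((hasDerivAt_const x (1:ℝ)).add (hHd x hx)).mul (hed x hx)).add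
      ((hUd x hx).mul (hεd x hx))
    exact hcomb.congr_deriv (by simp only [hDρdef, Pi.add_apply]; try ring)
  have hrd : ∀ x ∈ Ioo (0:ℝ) 1, HasDerivAt rr (Dr x) x := by
    intro x hx
    have hcomb := (hεd x hx).add ((hUd x hx).mul (hed x hx))
    exact hcomb.congr_deriv (by simp only [hDrdef]; try ring)
  have hDρeq : ∀ x ∈ Ioo (0:ℝ) 1, deriv ρ x = Dρ x := fun x hx => (hρd x hx).deriv
  have hDreq : ∀ x ∈ Ioo (0:ℝ) 1, deriv rr x = Dr x := fun x hx => (hrd x hx).deriv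
  have m1H : Mb (fun x => 1 + H x) := (mb_const 1).add mH
  have mw : Mb w := by rw [hwdef]; exact m1H.mul me
  have mDρ : Mb Dρ := by
    rw [hDρdef]
    exact ((mdH.mul me).add (m1H.mul mde)).add ((mdU.mul mε).add (mU.mul mdε))
  have mDr : Mb Dr := by
    rw [hDrdef]
    exact mdε.add ((mdU.mul me).add (mU.mul mde))
  have mdρf : Mb (deriv ρ) := Mb.congr_Ioo mDρ (fun x hx => (hDρeq x hx).symm)
  have mdrf : Mb (deriv rr) := Mb.congr_Ioo mDr (fun x hx => (hDreq x hx).symm)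
  -- Step A: remove the projection in the first term
  have hA : ip eps Pρ = ip eps (deriv ρ) := ip_proj_eq mdρf mPρ mε o1
  -- Step B: remove the projection in the second term
  have hB : ip w Pr = ip w (deriv rr)
      + ip (fun x => w x - gχ x) (fun x => Pr x - deriv rr x) := by
    unfold ip
    have hptw : ∀ x ∈ Ioo (0:ℝ) 1, w x * Pr x
        = (w x * deriv rr x + (w x - gχ x) * (Pr x - deriv rr x))
          + (Pr x - deriv rr x) * gχ x := fun x _ => by ring
    rw [integral01_congr hptw,
      intervalIntegral.integral_add
        ((mw.mul mdrf).add ((mw.sub mgχ).mul (mPr.sub mdrf))).intervalIntegrable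
        ((mPr.sub mdrf).mul mgχ).intervalIntegrable,
      intervalIntegral.integral_add (mw.mul mdrf).intervalIntegrable
        ((mw.sub mgχ).mul (mPr.sub mdrf)).intervalIntegrable]
    have ho2' : (∫ x in (0:ℝ)..1, (Pr x - deriv rr x) * gχ x) = 0 := by
      have h1 : (∫ x in (0:ℝ)..1, (Pr x - deriv rr x) * gχ x)
          = - ∫ x in (0:ℝ)..1, (deriv rr x - Pr x) * gχ x := by
        rw [← intervalIntegral.integral_neg]
        exact integral01_congr (fun x _ => by ring)
      rw [h1, show (∫ x in (0:ℝ)..1, (deriv rr x - Pr x) * gχ x) = 0 from o2, neg_zero]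
    rw [ho2']
    ring
  -- quadratic helpers
  have hXX : X * X ≤ X^2 + Y^2 := by
    have h1 : X * X = X^2 := (sq X).symm
    have h2 : (0:ℝ) ≤ Y^2 := sq_nonneg Y
    linarith only [h1, h2]
  have hYY : Y * Y ≤ X^2 + Y^2 := by
    have h1 : Y * Y = Y^2 := (sq Y).symm
    have h2 : (0:ℝ) ≤ X^2 := sq_nonneg X
    linarith only [h1, h2]
  have hXY2 : 2 * (X * Y) ≤ X^2 + Y^2 := by
    have h := two_mul_le_add_sq X Y
    linarith only [h]
  -- the functions R, Φ, DPhi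
  set t1 : ℝ → ℝ := fun x => ((1/2) * deriv un x) * eps x * eps x with ht1
  set t2 : ℝ → ℝ := fun x => (-(U x - un x)) * eps x * deriv eps x with ht2
  set t3 : ℝ → ℝ := fun x => ((1/2) * ((1 + H x) * deriv un x)) * e x * e x with ht3
  set t4 : ℝ → ℝ := fun x => ((-(1/2)) * ((U x - un x) * e x)) * deriv H x * e x with ht4
  set t5 : ℝ → ℝ := fun x => (-((U x - un x) * (1 + H x))) * e x * deriv e x with ht5
  set t6 : ℝ → ℝ := fun x => ((-(1/2)) * (deriv ηn x * U x)) * e x * e x with ht6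
  set t7 : ℝ → ℝ := fun x => ((1/2) * ((H x - ηn x) * e x)) * deriv U x * e x with ht7
  set t8 : ℝ → ℝ := fun x => ((H x - ηn x) * U x) * e x * deriv e x with ht8
  set R : ℝ → ℝ := fun x => t1 x + t2 x + t3 x + t4 x + t5 x + t6 x + t7 x + t8 x with hR
  set Φ : ℝ → ℝ := fun x => eps x * ((1 + H x) * e x) + (1/2) * (U x * (eps x * eps x))
    + (1/2) * ((1 + H x) * (U x * (e x * e x))) + (1/2) * ((U x - un x) * (eps x * eps x))
    + (1/2) * ((U x - un x) * ((1 + H x) * (e x * e x)))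
    - (1/2) * ((H x - ηn x) * (U x * (e x * e x))) with hΦ
  set DPhi : ℝ → ℝ := fun x => eps x * Dρ x + w x * Dr x - R x with hDPhi
  have mt1 : Mb t1 := by rw [ht1]; exact (((mb_const _).mul mdun).mul mε).mul mε
  have mt2 : Mb t2 := by rw [ht2]; exact ((Mb.neg' (mU.sub mun)).mul mε).mul mdε
  have mt3 : Mb t3 := by rw [ht3]; exact (((mb_const _).mul (m1H.mul mdun)).mul me).mul me
  have mt4 : Mb t4 := by rw [ht4]; exact (((mb_const _).mul ((mU.sub mun).mul me)).mul mdH).mul me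
  have mt5 : Mb t5 := by rw [ht5]; exact ((Mb.neg' ((mU.sub mun).mul m1H)).mul me).mul mde
  have mt6 : Mb t6 := by rw [ht6]; exact (((mb_const _).mul (mdηn.mul mU)).mul me).mul me
  have mt7 : Mb t7 := by rw [ht7]; exact (((mb_const _).mul ((mH.sub mηn).mul me)).mul mdU).mul me
  have mt8 : Mb t8 := by rw [ht8]; exact (((mH.sub mηn).mul mU).mul me).mul mde
  have mR : Mb R := by
    rw [hR]
    exact ((((((mt1.add mt2).add mt3).add mt4).add mt5).add mt6).add mt7).add mt8
  have mDPhi : Mb DPhi := by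
    rw [hDPhi]
    exact ((mε.mul mDρ).add (mw.mul mDr)).sub mR
  have hΦ0 : Φ 0 = 0 := by simp only [hΦ]; rw [he0, hU0, hun0]; ring
  have hΦ1 : Φ 1 = 0 := by simp only [hΦ]; rw [he1, hU1, hun1]; ring
  have hΦc : ContinuousOn Φ (Icc 0 1) := by
    simp only [hΦ]
    have h1c : ContinuousOn (fun x => (1:ℝ) + H x) (Icc (0:ℝ) 1) := continuousOn_const.add hHc
    exact ((((((hεc.mul (h1c.mul hec))).add
      (continuousOn_const.mul (hUc.mul (hεc.mul hεc)))).add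
      (continuousOn_const.mul (h1c.mul (hUc.mul (hec.mul hec))))).add
      (continuousOn_const.mul ((hUc.sub hunc.continuousOn).mul (hεc.mul hεc)))).add
      (continuousOn_const.mul ((hUc.sub hunc.continuousOn).mul (h1c.mul (hec.mul hec))))).sub
      (continuousOn_const.mul ((hHc.sub hηnc.continuousOn).mul (hUc.mul (hec.mul hec))))
  have hΦd : ∀ x ∈ Ioo (0:ℝ) 1, HasDerivAt Φ (DPhi x) x := by
    intro x hx
    have hE := hεd x hx
    have hE2 := hed x hx
    have hH1 := hHd x hx
    have hU1 := hUd x hx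
    have hu1 := hund x
    have hη1 := hηnd x
    have hone := hasDerivAt_const x (1:ℝ)
    have hcomb := (((((hE.mul ((hone.add hH1).mul hE2)).add
        (HasDerivAt.const_mul ((1:ℝ)/2) (hU1.mul (hE.mul hE)))).add
        (HasDerivAt.const_mul ((1:ℝ)/2) ((hone.add hH1).mul (hU1.mul (hE2.mul hE2))))).add
        (HasDerivAt.const_mul ((1:ℝ)/2) ((hU1.sub hu1).mul (hE.mul hE)))).add
        (HasDerivAt.const_mul ((1:ℝ)/2) ((hU1.sub hu1).mul ((hone.add hH1).mul (hE2.mul hE2))))).sub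
        (HasDerivAt.const_mul ((1:ℝ)/2) ((hH1.sub hη1).mul (hU1.mul (hE2.mul hE2))))
    exact hcomb.congr_deriv (by
      simp only [hDPhi, hDρdef, hDrdef, hR, ht1, ht2, ht3, ht4, ht5, ht6, ht7, ht8, hwdef, Pi.add_apply, Pi.sub_apply, Pi.mul_apply]
      ring)
  have hFTC : (∫ x in (0:ℝ)..1, DPhi x) = 0 :=
    integral_DPhi_eq_zero hΦc hΦd mDPhi.intervalIntegrable hΦ0 hΦ1
  have hpt : ∀ x ∈ Ioo (0:ℝ) 1,
      eps x * deriv ρ x + w x * deriv rr x = DPhi x + R x := by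
    intro x hx
    rw [hDρeq x hx, hDreq x hx]
    simp only [hDPhi]
    ring
  have hC : ip eps (deriv ρ) + ip w (deriv rr) = ∫ x in (0:ℝ)..1, R x := by
    unfold ip
    rw [← intervalIntegral.integral_add (mε.mul mdρf).intervalIntegrable
      (mw.mul mdrf).intervalIntegrable]
    rw [integral01_congr hpt]
    rw [intervalIntegral.integral_add mDPhi.intervalIntegrable mR.intervalIntegrable,
      hFTC, zero_add]
  have hRsplit : (∫ x in (0:ℝ)..1, R x)
      = (∫ x in (0:ℝ)..1, t1 x) + (∫ x in (0:ℝ)..1, t2 x) + (∫ x in (0:ℝ)..1, t3 x)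
      + (∫ x in (0:ℝ)..1, t4 x) + (∫ x in (0:ℝ)..1, t5 x) + (∫ x in (0:ℝ)..1, t6 x)
      + (∫ x in (0:ℝ)..1, t7 x) + (∫ x in (0:ℝ)..1, t8 x) := by
    simp only [hR]
    rw [intervalIntegral.integral_add
        ((((((mt1.add mt2).add mt3).add mt4).add mt5).add mt6).add mt7).intervalIntegrable
        mt8.intervalIntegrable,
      intervalIntegral.integral_add
        (((((mt1.add mt2).add mt3).add mt4).add mt5).add mt6).intervalIntegrable
        mt7.intervalIntegrable,
      intervalIntegral.integral_add
        ((((mt1.add mt2).add mt3).add mt4).add mt5).intervalIntegrable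
        mt6.intervalIntegrable,
      intervalIntegral.integral_add
        (((mt1.add mt2).add mt3).add mt4).intervalIntegrable mt5.intervalIntegrable,
      intervalIntegral.integral_add
        ((mt1.add mt2).add mt3).intervalIntegrable mt4.intervalIntegrable,
      intervalIntegral.integral_add
        (mt1.add mt2).intervalIntegrable mt3.intervalIntegrable,
      intervalIntegral.integral_add mt1.intervalIntegrable mt2.intervalIntegrable]

  have hmemIoo : ∀ x ∈ Ioo (0:ℝ) 1, x ∈ Icc (0:ℝ) 1 := fun x hx => Set.mem_Icc_of_Ioo hx
  -- T1
  have hT1 : |∫ x in (0:ℝ)..1, t1 x| ≤ (Ku/2) * (X * X) := by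
    simp only [ht1]
    refine abs_integral_cfg_le (by linarith only [hKu0]) ((mb_const _).mul mdun) mε mε ?_
    intro x hx
    rw [abs_mul]
    have hb := (hbu x (hmemIoo x hx)).2
    have h12 : |(1/2:ℝ)| = 1/2 := by norm_num
    rw [h12]
    linarith only [hb]
  have hT1' : |∫ x in (0:ℝ)..1, t1 x| ≤ (Ku/2) * (X^2+Y^2) :=
    le_trans hT1 (mul_le_mul_of_nonneg_left hXX (by linarith only [hKu0]))
  -- T2
  have hMU0 : (0:ℝ) ≤ MUC * h^r := mul_nonneg hMUC0 (pow_nonneg hh0.le r)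
  have hMH0 : (0:ℝ) ≤ MHC * h^r := mul_nonneg hMHC0 (pow_nonneg hh0.le r)
  have hT2 : |∫ x in (0:ℝ)..1, t2 x| ≤ (MUC*h^r) * (X * L2 (deriv eps)) := by
    simp only [ht2]
    refine abs_integral_cfg_le hMU0 (Mb.neg' (mU.sub mun)) mε mdε ?_
    intro x hx
    rw [abs_neg]
    exact f6 x (hmemIoo x hx)
  have hT2' : |∫ x in (0:ℝ)..1, t2 x| ≤ (MUC*Ci'*cb^(r-1)) * (X^2+Y^2) := by
    refine le_trans hT2 ?_
    calc (MUC*h^r) * (X * L2 (deriv eps)) ≤ (MUC*h^r) * (X * (Ci'/h*X)) :=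
          mul_le_mul_of_nonneg_left (mul_le_mul_of_nonneg_left f1 hX0) hMU0
      _ = (MUC*Ci'*h^(r-1))*(X*X) := by rw [hrpow]; field_simp
      _ ≤ (MUC*Ci'*cb^(r-1))*(X*X) := by
          refine mul_le_mul_of_nonneg_right ?_ (mul_self_nonneg X)
          exact mul_le_mul_of_nonneg_left hq' (mul_nonneg hMUC0 hCi'0.le)
      _ ≤ (MUC*Ci'*cb^(r-1))*(X^2+Y^2) := by
          refine mul_le_mul_of_nonneg_left hXX ?_
          exact mul_nonneg (mul_nonneg hMUC0 hCi'0.le) (pow_nonneg hcb0.le _)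
  -- T3
  have hCH1 : (0:ℝ) ≤ 1 + CH := by linarith only [hCH0]
  have hBH30 : (0:ℝ) ≤ (1/2)*((1+CH)*Ku) := by
    have h1 := mul_nonneg hCH1 hKu0
    linarith only [h1]
  have hT3 : |∫ x in (0:ℝ)..1, t3 x| ≤ ((1/2)*((1+CH)*Ku)) * (Y*Y) := by
    simp only [ht3]
    refine abs_integral_cfg_le hBH30 ((mb_const _).mul (m1H.mul mdun)) me me ?_
    intro x hx
    have hb1 : |1 + H x| ≤ 1 + CH := by
      have h1 := f4 x (hmemIoo x hx)
      calc |1 + H x| ≤ |(1:ℝ)| + |H x| := abs_add_le _ _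
        _ ≤ 1 + CH := by rw [abs_one]; linarith only [h1]
    have hb2 := (hbu x (hmemIoo x hx)).2
    rw [abs_mul, abs_mul]
    have h12 : |(1/2:ℝ)| = 1/2 := by norm_num
    rw [h12]
    have h2 : |1 + H x| * |deriv un x| ≤ (1+CH)*Ku :=
      mul_le_mul hb1 hb2 (abs_nonneg _) hCH1
    linarith only [h2]
  have hT3' : |∫ x in (0:ℝ)..1, t3 x| ≤ ((1/2)*((1+CH)*Ku)) * (X^2+Y^2) :=
    le_trans hT3 (mul_le_mul_of_nonneg_left hYY hBH30)
  -- T4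
  have hBe0 : (0:ℝ) ≤ Ci'/s*Y := mul_nonneg (div_nonneg hCi'0.le hs0.le) hY0
  have hK40 : (0:ℝ) ≤ (1/2)*((MUC*h^r)*(Ci'/s*Y)) := by
    have h1 := mul_nonneg hMU0 hBe0
    linarith only [h1]
  have hT4 : |∫ x in (0:ℝ)..1, t4 x|
      ≤ ((1/2)*((MUC*h^r)*(Ci'/s*Y))) * (L2 (deriv H) * L2 e) := by
    simp only [ht4]
    refine abs_integral_cfg_le hK40 ((mb_const _).mul ((mU.sub mun).mul me)) mdH me ?_
    intro x hx
    rw [abs_mul]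
    have hmeq : |(-(1/2):ℝ)| = 1/2 := by norm_num
    rw [hmeq, abs_mul]
    have hb1 := f6 x (hmemIoo x hx)
    have hb2 := f3 x (hmemIoo x hx)
    have h2 : |U x - un x| * |e x| ≤ (MUC*h^r)*(Ci'/s*Y) :=
      mul_le_mul hb1 hb2 (abs_nonneg _) hMU0
    linarith only [h2]
  have hT4' : |∫ x in (0:ℝ)..1, t4 x| ≤ ((1/2)*(MUC*Ci'*LH)*cb^r) * (X^2+Y^2) := by
    refine le_trans hT4 ?_
    have hA40 : (0:ℝ) ≤ (1/2)*(MUC*Ci'*LH) := by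
      have h1 : (0:ℝ) ≤ MUC*Ci'*LH := mul_nonneg (mul_nonneg hMUC0 hCi'0.le) hLH0
      linarith only [h1]
    calc ((1/2)*((MUC*h^r)*(Ci'/s*Y))) * (L2 (deriv H) * L2 e)
        ≤ ((1/2)*((MUC*h^r)*(Ci'/s*Y))) * (LH * Y) :=
          mul_le_mul_of_nonneg_left (mul_le_mul_of_nonneg_right f8 hY0) hK40
      _ = ((1/2)*(MUC*Ci'*LH))*(h^r/s)*(Y*Y) := by field_simp
      _ ≤ ((1/2)*(MUC*Ci'*LH))*cb^r*(Y*Y) := by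
          refine mul_le_mul_of_nonneg_right ?_ (mul_self_nonneg Y)
          exact mul_le_mul_of_nonneg_left hq hA40
      _ ≤ ((1/2)*(MUC*Ci'*LH)*cb^r)*(X^2+Y^2) := by
          refine mul_le_mul_of_nonneg_left hYY ?_
          exact mul_nonneg hA40 (pow_nonneg hcb0.le _)
  -- T5
  have hK50 : (0:ℝ) ≤ (MUC*h^r)*(1+CH) := mul_nonneg hMU0 hCH1
  have hT5 : |∫ x in (0:ℝ)..1, t5 x| ≤ ((MUC*h^r)*(1+CH)) * (L2 e * L2 (deriv e)) := by
    simp only [ht5]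
    refine abs_integral_cfg_le hK50 (Mb.neg' ((mU.sub mun).mul m1H)) me mde ?_
    intro x hx
    rw [abs_neg, abs_mul]
    have hb1 := f6 x (hmemIoo x hx)
    have hb2 : |1 + H x| ≤ 1 + CH := by
      have h1 := f4 x (hmemIoo x hx)
      calc |1 + H x| ≤ |(1:ℝ)| + |H x| := abs_add_le _ _
        _ ≤ 1 + CH := by rw [abs_one]; linarith only [h1]
    exact mul_le_mul hb1 hb2 (abs_nonneg _) hMU0
  have hT5' : |∫ x in (0:ℝ)..1, t5 x| ≤ (MUC*(1+CH)*Ci'*cb^(r-1)) * (X^2+Y^2) := by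
    refine le_trans hT5 ?_
    have hA50 : (0:ℝ) ≤ MUC*(1+CH)*Ci' := mul_nonneg (mul_nonneg hMUC0 hCH1) hCi'0.le
    calc ((MUC*h^r)*(1+CH)) * (L2 e * L2 (deriv e))
        ≤ ((MUC*h^r)*(1+CH)) * (Y * (Ci'/h*Y)) :=
          mul_le_mul_of_nonneg_left (mul_le_mul_of_nonneg_left f2 hY0) hK50
      _ = (MUC*(1+CH)*Ci'*h^(r-1))*(Y*Y) := by rw [hrpow]; field_simp
      _ ≤ (MUC*(1+CH)*Ci'*cb^(r-1))*(Y*Y) := by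
          refine mul_le_mul_of_nonneg_right ?_ (mul_self_nonneg Y)
          exact mul_le_mul_of_nonneg_left hq' hA50
      _ ≤ (MUC*(1+CH)*Ci'*cb^(r-1))*(X^2+Y^2) := by
          refine mul_le_mul_of_nonneg_left hYY ?_
          exact mul_nonneg hA50 (pow_nonneg hcb0.le _)
  -- T6
  have hK60 : (0:ℝ) ≤ (1/2)*(Kv*CU) := by
    have h1 := mul_nonneg hKv0 hCU0
    linarith only [h1]
  have hT6 : |∫ x in (0:ℝ)..1, t6 x| ≤ ((1/2)*(Kv*CU)) * (Y*Y) := by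
    simp only [ht6]
    refine abs_integral_cfg_le hK60 ((mb_const _).mul (mdηn.mul mU)) me me ?_
    intro x hx
    rw [abs_mul]
    have hmeq : |(-(1/2):ℝ)| = 1/2 := by norm_num
    rw [hmeq, abs_mul]
    have hb1 := (hbη x (hmemIoo x hx)).2
    have hb2 := f5 x (hmemIoo x hx)
    have h2 : |deriv ηn x| * |U x| ≤ Kv*CU := mul_le_mul hb1 hb2 (abs_nonneg _) hKv0
    linarith only [h2]
  have hT6' : |∫ x in (0:ℝ)..1, t6 x| ≤ ((1/2)*(Kv*CU)) * (X^2+Y^2) :=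
    le_trans hT6 (mul_le_mul_of_nonneg_left hYY hK60)
  -- T7
  have hK70 : (0:ℝ) ≤ (1/2)*((MHC*h^r)*(Ci'/s*Y)) := by
    have h1 := mul_nonneg hMH0 hBe0
    linarith only [h1]
  have hT7 : |∫ x in (0:ℝ)..1, t7 x|
      ≤ ((1/2)*((MHC*h^r)*(Ci'/s*Y))) * (L2 (deriv U) * L2 e) := by
    simp only [ht7]
    refine abs_integral_cfg_le hK70 ((mb_const _).mul ((mH.sub mηn).mul me)) mdU me ?_
    intro x hx
    rw [abs_mul]
    have hmeq : |(1/2:ℝ)| = 1/2 := by norm_num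
    rw [hmeq, abs_mul]
    have hb1 := f7 x (hmemIoo x hx)
    have hb2 := f3 x (hmemIoo x hx)
    have h2 : |H x - ηn x| * |e x| ≤ (MHC*h^r)*(Ci'/s*Y) :=
      mul_le_mul hb1 hb2 (abs_nonneg _) hMH0
    linarith only [h2]
  have hT7' : |∫ x in (0:ℝ)..1, t7 x| ≤ ((1/2)*(MHC*Ci'*LU)*cb^r) * (X^2+Y^2) := by
    refine le_trans hT7 ?_
    have hA70 : (0:ℝ) ≤ (1/2)*(MHC*Ci'*LU) := by
      have h1 : (0:ℝ) ≤ MHC*Ci'*LU := mul_nonneg (mul_nonneg hMHC0 hCi'0.le) hLU0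
      linarith only [h1]
    calc ((1/2)*((MHC*h^r)*(Ci'/s*Y))) * (L2 (deriv U) * L2 e)
        ≤ ((1/2)*((MHC*h^r)*(Ci'/s*Y))) * (LU * Y) :=
          mul_le_mul_of_nonneg_left (mul_le_mul_of_nonneg_right f9 hY0) hK70
      _ = ((1/2)*(MHC*Ci'*LU))*(h^r/s)*(Y*Y) := by field_simp
      _ ≤ ((1/2)*(MHC*Ci'*LU))*cb^r*(Y*Y) := by
          refine mul_le_mul_of_nonneg_right ?_ (mul_self_nonneg Y)
          exact mul_le_mul_of_nonneg_left hq hA70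
      _ ≤ ((1/2)*(MHC*Ci'*LU)*cb^r)*(X^2+Y^2) := by
          refine mul_le_mul_of_nonneg_left hYY ?_
          exact mul_nonneg hA70 (pow_nonneg hcb0.le _)
  -- T8
  have hK80 : (0:ℝ) ≤ (MHC*h^r)*CU := mul_nonneg hMH0 hCU0
  have hT8 : |∫ x in (0:ℝ)..1, t8 x| ≤ ((MHC*h^r)*CU) * (L2 e * L2 (deriv e)) := by
    simp only [ht8]
    refine abs_integral_cfg_le hK80 ((mH.sub mηn).mul mU) me mde ?_
    intro x hx
    rw [abs_mul]
    have hb1 := f7 x (hmemIoo x hx)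
    have hb2 := f5 x (hmemIoo x hx)
    exact mul_le_mul hb1 hb2 (abs_nonneg _) hMH0
  have hT8' : |∫ x in (0:ℝ)..1, t8 x| ≤ (MHC*CU*Ci'*cb^(r-1)) * (X^2+Y^2) := by
    refine le_trans hT8 ?_
    have hA80 : (0:ℝ) ≤ MHC*CU*Ci' := mul_nonneg (mul_nonneg hMHC0 hCU0) hCi'0.le
    calc ((MHC*h^r)*CU) * (L2 e * L2 (deriv e))
        ≤ ((MHC*h^r)*CU) * (Y * (Ci'/h*Y)) :=
          mul_le_mul_of_nonneg_left (mul_le_mul_of_nonneg_left f2 hY0) hK80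
      _ = (MHC*CU*Ci'*h^(r-1))*(Y*Y) := by rw [hrpow]; field_simp
      _ ≤ (MHC*CU*Ci'*cb^(r-1))*(Y*Y) := by
          refine mul_le_mul_of_nonneg_right ?_ (mul_self_nonneg Y)
          exact mul_le_mul_of_nonneg_left hq' hA80
      _ ≤ (MHC*CU*Ci'*cb^(r-1))*(X^2+Y^2) := by
          refine mul_le_mul_of_nonneg_left hYY ?_
          exact mul_nonneg hA80 (pow_nonneg hcb0.le _)
  -- E-term
  set Cw := Cs' + MHC*cb^(r-1) with hCwdef
  have hCw0 : (0:ℝ) ≤ Cw := by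
    have h1 : (0:ℝ) ≤ MHC*cb^(r-1) := mul_nonneg hMHC0 (pow_nonneg hcb0.le _)
    rw [hCwdef]
    linarith only [hCs'0, h1]
  have hW1 : L2 (fun x => w x - gχ x) ≤ Cw * (h*Y) := by
    calc L2 (fun x => w x - gχ x)
        = L2 (fun x => (H x - ηn x) * e x - (gχ x - (1 + ηn x) * e x)) :=
          L2_congr_Ioo (fun x _ => by simp only [hwdef]; ring)
      _ ≤ L2 (fun x => (H x - ηn x) * e x) + L2 (fun x => gχ x - (1 + ηn x) * e x) :=
          L2_sub_le ((mH.sub mηn).mul me) (mgχ.sub (((mb_const 1).add mηn).mul me))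
      _ ≤ (MHC*h^r) * Y + Cs'*h*Y := by
          refine add_le_add ?_ fsa
          exact L2_mul_le hMH0 (mH.sub mηn) me (fun x hx => f7 x (hmemIoo x hx))
      _ ≤ Cw * (h*Y) := by
          have h2 : MHC*h^r ≤ MHC*(cb^(r-1)*h) := mul_le_mul_of_nonneg_left hqr hMHC0
          have h3 : MHC*h^r*Y ≤ MHC*(cb^(r-1)*h)*Y := mul_le_mul_of_nonneg_right h2 hY0
          have h4 : Cw*(h*Y) = MHC*(cb^(r-1)*h)*Y + Cs'*h*Y := by rw [hCwdef]; ring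
          linarith only [h3, h4]
  have hL2Pr : L2 Pr ≤ L2 (deriv rr) := L2_proj_le mdrf mPr o3
  have hL2drr : L2 (deriv rr) = L2 Dr := L2_congr_Ioo hDreq
  have hL2dUe : L2 (fun x => deriv U x * e x) ≤ (Ci'/s*Y) * LU := by
    calc L2 (fun x => deriv U x * e x) = L2 (fun x => e x * deriv U x) :=
          L2_congr_Ioo (fun x _ => by ring)
      _ ≤ (Ci'/s*Y) * L2 (deriv U) := L2_mul_le hBe0 me mdU (fun x hx => f3 x (hmemIoo x hx))
      _ ≤ (Ci'/s*Y) * LU := mul_le_mul_of_nonneg_left f9 hBe0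
  have hL2Ude : L2 (fun x => U x * deriv e x) ≤ CU * (Ci'/h*Y) := by
    calc L2 (fun x => U x * deriv e x) ≤ CU * L2 (deriv e) :=
          L2_mul_le hCU0 mU mde (fun x hx => f5 x (hmemIoo x hx))
      _ ≤ CU * (Ci'/h*Y) := mul_le_mul_of_nonneg_left f2 hCU0
  have hL2Dr : L2 Dr ≤ Ci'/h*X + ((Ci'/s*Y)*LU + CU*(Ci'/h*Y)) := by
    have h1 : L2 Dr ≤ L2 (deriv eps) + L2 (fun x => deriv U x * e x + U x * deriv e x) := by
      rw [hDrdef]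
      exact L2_add_le mdε ((mdU.mul me).add (mU.mul mde))
    have h2 : L2 (fun x => deriv U x * e x + U x * deriv e x)
        ≤ L2 (fun x => deriv U x * e x) + L2 (fun x => U x * deriv e x) :=
      L2_add_le (mdU.mul me) (mU.mul mde)
    linarith only [h1, h2, f1, hL2dUe, hL2Ude]
  have hDrB : L2 (fun x => Pr x - deriv rr x)
      ≤ 2*(Ci'/h*X + ((Ci'/s*Y)*LU + CU*(Ci'/h*Y))) := by
    have h1 : L2 (fun x => Pr x - deriv rr x) ≤ L2 Pr + L2 (deriv rr) := L2_sub_le mPr mdrf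
    have h2 : L2 (deriv rr) ≤ Ci'/h*X + ((Ci'/s*Y)*LU + CU*(Ci'/h*Y)) := by
      rw [hL2drr]
      exact hL2Dr
    linarith only [h1, h2, hL2Pr]
  have hE1 : |ip (fun x => w x - gχ x) (fun x => Pr x - deriv rr x)|
      ≤ (Cw*(h*Y)) * (2*(Ci'/h*X + ((Ci'/s*Y)*LU + CU*(Ci'/h*Y)))) := by
    refine le_trans (abs_ip_le (mw.sub mgχ) (mPr.sub mdrf)) ?_
    refine mul_le_mul hW1 hDrB (L2_nonneg _) ?_
    exact mul_nonneg hCw0 (mul_nonneg hh0.le hY0)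
  have hEeq : (Cw*(h*Y)) * (2*(Ci'/h*X + ((Ci'/s*Y)*LU + CU*(Ci'/h*Y))))
      = 2*Cw*Ci'*(X*Y) + 2*Cw*LU*Ci'*s*(Y*Y) + 2*Cw*CU*Ci'*(Y*Y) := by
    rw [← hss]
    field_simp
    ring
  have hE2 : |ip (fun x => w x - gχ x) (fun x => Pr x - deriv rr x)|
      ≤ Cw*Ci'*(X^2+Y^2) + 2*Cw*LU*Ci'*cb*(X^2+Y^2) + 2*Cw*CU*Ci'*(X^2+Y^2) := by
    rw [hEeq] at hE1
    have p1 : 2*Cw*Ci'*(X*Y) ≤ Cw*Ci'*(X^2+Y^2) := by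
      have h1 : (0:ℝ) ≤ Cw*Ci' := mul_nonneg hCw0 hCi'0.le
      have h2 := mul_le_mul_of_nonneg_left hXY2 h1
      calc 2*Cw*Ci'*(X*Y) = Cw*Ci'*(2*(X*Y)) := by ring
        _ ≤ Cw*Ci'*(X^2+Y^2) := h2
    have p2 : 2*Cw*LU*Ci'*s*(Y*Y) ≤ 2*Cw*LU*Ci'*cb*(X^2+Y^2) := by
      have h1 : (0:ℝ) ≤ 2*Cw*LU*Ci' := by
        have h0 := mul_nonneg (mul_nonneg hCw0 hLU0) hCi'0.le
        linarith only [h0]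
      have h3 : s*(Y*Y) ≤ cb*(Y*Y) := mul_le_mul_of_nonneg_right hscb (mul_self_nonneg Y)
      have h4 : cb*(Y*Y) ≤ cb*(X^2+Y^2) := mul_le_mul_of_nonneg_left hYY hcb0.le
      have h2 : s*(Y*Y) ≤ cb*(X^2+Y^2) := le_trans h3 h4
      calc 2*Cw*LU*Ci'*s*(Y*Y) = (2*Cw*LU*Ci')*(s*(Y*Y)) := by ring
        _ ≤ (2*Cw*LU*Ci')*(cb*(X^2+Y^2)) := mul_le_mul_of_nonneg_left h2 h1
        _ = 2*Cw*LU*Ci'*cb*(X^2+Y^2) := by ring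
    have p3 : 2*Cw*CU*Ci'*(Y*Y) ≤ 2*Cw*CU*Ci'*(X^2+Y^2) := by
      have h1 : (0:ℝ) ≤ 2*Cw*CU*Ci' := by
        have h0 := mul_nonneg (mul_nonneg hCw0 hCU0) hCi'0.le
        linarith only [h0]
      exact mul_le_mul_of_nonneg_left hYY h1
    linarith only [hE1, p1, p2, p3]
  -- final assembly
  rw [hA, hB, ← add_assoc]
  have htri := abs_add_le (ip eps (deriv ρ) + ip w (deriv rr))
    (ip (fun x => w x - gχ x) (fun x => Pr x - deriv rr x))
  have hmain : |ip eps (deriv ρ) + ip w (deriv rr)|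
      ≤ |∫ x in (0:ℝ)..1, t1 x| + |∫ x in (0:ℝ)..1, t2 x| + |∫ x in (0:ℝ)..1, t3 x|
      + |∫ x in (0:ℝ)..1, t4 x| + |∫ x in (0:ℝ)..1, t5 x| + |∫ x in (0:ℝ)..1, t6 x|
      + |∫ x in (0:ℝ)..1, t7 x| + |∫ x in (0:ℝ)..1, t8 x| := by
    rw [hC, hRsplit]
    exact abs_add8 _ _ _ _ _ _ _ _
  clear_value X Y Cw
  linarith only [htri, hmain, hT1', hT2', hT3', hT4', hT5', hT6', hT7', hT8', hE2]


end Aux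

set_option maxHeartbeats 1000000 in
/-- The estimate (4.46) for `β₁ⁿ`:
`|(εⁿ, Pρₓⁿ) + ((1+Hⁿ)eⁿ, P₀rₓⁿ)| ≤ C (‖εⁿ‖² + ‖eⁿ‖²)`. -/
theorem stmt16 (r μ : ℕ) (hr : 3 ≤ r) (hμ1 : 1 ≤ μ) (hμ2 : μ ≤ r - 2)
    (c Ci Cp Cs T α : ℝ) (hc : 0 < c) (hT : 0 < T) (hα : 0 < α)
    (η u : ℝ → ℝ → ℝ) (hsol : SWSolution T α η u) :
    ∃ C : ℝ, ∀ (D : Disc c) (P P0 : (ℝ → ℝ) → (ℝ → ℝ)) (k : ℝ) (M : ℕ),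
      IsL2Proj (Sp r μ D) P → IsL2Proj (Sp0 r μ D) P0 →
      InvIneq (Sp r μ D) μ D.h Ci → InvIneq (Sp0 r μ D) μ D.h Ci →
      ProjBounds P r D.h Cp → ProjBounds0 P0 r D.h Cp →
      (∀ t ∈ Icc (0:ℝ) T, ∀ ξ ∈ Sp0 r μ D,
        L2 (fun x => P0 (fun y => (1 + η t y) * ξ y) x - (1 + η t x) * ξ x)
          ≤ Cs * D.h * L2 ξ) →
      0 < k → k * M = T →
      ∀ n : ℕ, n ≤ M → ∀ eps ∈ Sp r μ D, ∀ e ∈ Sp0 r μ D,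
      let Hn := P (η ((n : ℝ) * k))
      let Un := P0 (u ((n : ℝ) * k))
      let rp := rhoPair P P0 Hn Un eps e
      |ip eps (P (deriv (rp 0).1))
          + ip (fun x => (1 + Hn x) * e x) (P0 (deriv (rp 0).2))|
        ≤ C * ((L2 eps) ^ 2 + (L2 e) ^ 2) := by
  obtain ⟨hηs, hus, -, -, hubc, -⟩ := hsol
  obtain ⟨KWη, hKWη0, hKWη⟩ := Aux.Winf_bound hηs T r
  obtain ⟨KWu, hKWu0, hKWu⟩ := Aux.Winf_bound hus T r
  obtain ⟨Kv, hKv0, hKv⟩ := Aux.val_deriv_bound hηs T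
  obtain ⟨Ku, hKu0, hKu⟩ := Aux.val_deriv_bound hus T
  obtain ⟨K1η, hK1η0, hK1η⟩ := Aux.Hs1_bound hηs T
  obtain ⟨K1u, hK1u0, hK1u⟩ := Aux.Hs1_bound hus T
  set Cp' := max Cp 1 with hCp'def
  set Ci' := max Ci 1 with hCi'def
  set Cs' := max Cs 1 with hCs'def
  set cb := max (1/c) 1 with hcbdef
  have hCp'1 : (1:ℝ) ≤ Cp' := le_max_right _ _
  have hCp'0 : (0:ℝ) < Cp' := lt_of_lt_of_le one_pos hCp'1
  have hCi'1 : (1:ℝ) ≤ Ci' := le_max_right _ _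
  have hCs'0 : (0:ℝ) ≤ Cs' := le_trans one_pos.le (le_max_right _ _)
  have hcb1 : (1:ℝ) ≤ cb := le_max_right _ _
  set CH := Cp' * Kv with hCHdef
  set CU := Cp' * Ku with hCUdef
  set MUC := Cp' * KWu with hMUCdef
  set MHC := Cp' * KWη with hMHCdef
  set LH := Cp' * K1η with hLHdef
  set LU := Cp' * K1u with hLUdef
  have hCH0 : (0:ℝ) ≤ CH := mul_nonneg hCp'0.le hKv0
  have hCU0 : (0:ℝ) ≤ CU := mul_nonneg hCp'0.le hKu0
  have hMUC0 : (0:ℝ) ≤ MUC := mul_nonneg hCp'0.le hKWu0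
  have hMHC0 : (0:ℝ) ≤ MHC := mul_nonneg hCp'0.le hKWη0
  have hLH0 : (0:ℝ) ≤ LH := mul_nonneg hCp'0.le hK1η0
  have hLU0 : (0:ℝ) ≤ LU := mul_nonneg hCp'0.le hK1u0
  refine ⟨Ku/2 + MUC*Ci'*cb^(r-1)
        + ((1/2)*(1+CH)*Ku + (1/2)*(MUC*Ci'*LH)*cb^r + MUC*(1+CH)*Ci'*cb^(r-1))
        + ((1/2)*Kv*CU + (1/2)*(MHC*Ci'*LU)*cb^r + MHC*CU*Ci'*cb^(r-1))
        + ((Cs' + MHC*cb^(r-1))*Ci' + 2*(Cs' + MHC*cb^(r-1))*LU*Ci'*cb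
           + 2*(Cs' + MHC*cb^(r-1))*CU*Ci'), ?_⟩
  intro D P P0 k M hP hP0 hInv hInv0 hPB hPB0 hSA hk hkM n hn eps heps e he
  have hh0 : 0 < D.h := D.h_pos
  have hsh0 : 0 < Real.sqrt D.h := Real.sqrt_pos.mpr hh0
  have hch : c * D.h ≤ 1 := by
    have hq := D.quasi 0
    have h0 : D.pt (Fin.castSucc 0) = 0 := by rw [Fin.castSucc_zero]; exact D.left
    have h1 : D.pt (Fin.succ 0) ≤ 1 := by
      rw [← D.right]
      exact D.mono.monotone (Fin.le_last _)
    rw [h0] at hq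
    linarith only [hq, h1]
  have hhcb : D.h ≤ cb := by
    have h2 : D.h ≤ 1 / c := by
      rw [le_div_iff₀ hc]
      calc D.h * c = c * D.h := mul_comm _ _
        _ ≤ 1 := hch
    exact le_trans h2 (le_max_left _ _)
  set tn := (n:ℝ) * k with htndef
  have htn : tn ∈ Icc (0:ℝ) T := by
    constructor
    · exact mul_nonneg (Nat.cast_nonneg n) hk.le
    · have h1 : (n:ℝ) ≤ (M:ℝ) := Nat.cast_le.mpr hn
      calc (n:ℝ) * k ≤ (M:ℝ) * k := mul_le_mul_of_nonneg_right h1 hk.le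
        _ = T := by rw [← hkM]; ring
  -- time slices
  have hunsm := Aux.smooth_slice hus tn
  have hηnsm := Aux.smooth_slice hηs tn
  have hunc : Continuous (u tn) := hunsm.continuous
  have hηnc : Continuous (η tn) := hηnsm.continuous
  have hund : ∀ x : ℝ, HasDerivAt (u tn) (deriv (u tn) x) x := Aux.smooth_hasDerivAt hus tn
  have hηnd : ∀ x : ℝ, HasDerivAt (η tn) (deriv (η tn) x) x := Aux.smooth_hasDerivAt hηs tn
  have mun : Aux.Mb (u tn) := Aux.mb_of_continuousOn hunc.continuousOn
  have mηn : Aux.Mb (η tn) := Aux.mb_of_continuousOn hηnc.continuousOn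
  have mdun : Aux.Mb (deriv (u tn)) := Aux.mb_of_continuousOn
    ((hunsm.continuous_deriv (by exact_mod_cast le_top)).continuousOn)
  have mdηn : Aux.Mb (deriv (η tn)) := Aux.mb_of_continuousOn
    ((hηnsm.continuous_deriv (by exact_mod_cast le_top)).continuousOn)
  have hbu := hKu tn htn
  have hbη := hKv tn htn
  obtain ⟨hun0, hun1⟩ := hubc tn htn
  have he0 : e 0 = 0 := he.2.1
  have he1 : e 1 = 0 := he.2.2
  -- membership
  have hHmem : P (η tn) ∈ Sp r μ D := hP.1 (η tn)
  have hUmem0 : P0 (u tn) ∈ Sp0 r μ D := hP0.1 (u tn)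
  have hU0 : P0 (u tn) 0 = 0 := hUmem0.2.1
  have hU1 : P0 (u tn) 1 = 0 := hUmem0.2.2
  -- spline facts
  obtain ⟨hεc, hεd, hKε, mε, mdε⟩ := Aux.spline_facts hμ1 heps.1
  obtain ⟨hec, hed, hKe, me, mde⟩ := Aux.spline_facts hμ1 he.1.1
  obtain ⟨hHc, hHd, hKH, mH, mdH⟩ := Aux.spline_facts hμ1 hHmem.1
  obtain ⟨hUc, hUd, hKU, mU, mdU⟩ := Aux.spline_facts hμ1 hUmem0.1.1
  -- smoothness of the slices (for the projection bounds)
  have hund1 : DifferentiableOn ℝ (u tn) (Icc 0 1) :=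
    (hunsm.differentiable (by simp)).differentiableOn
  have hηnd1 : DifferentiableOn ℝ (η tn) (Icc 0 1) :=
    (hηnsm.differentiable (by simp)).differentiableOn
  have huncd : ContDiffOn ℝ r (u tn) (Icc 0 1) :=
    (hunsm.of_le (by exact_mod_cast le_top)).contDiffOn
  have hηncd : ContDiffOn ℝ r (η tn) (Icc 0 1) :=
    (hηnsm.of_le (by exact_mod_cast le_top)).contDiffOn
  -- norm estimates
  have hmono : ∀ a b z : ℝ, 0 ≤ z → a ≤ b → a * z ≤ b * z :=
    fun a b z hz hab => mul_le_mul_of_nonneg_right hab hz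
  have f1 : L2 (deriv eps) ≤ Ci' / D.h * L2 eps := by
    have h1 := (hInv eps heps).1 1 0 (by omega) (by omega)
    rw [Aux.Hs0_eq] at h1
    have h2 : L2 (deriv eps) ≤ Hs 1 eps := Aux.L2_deriv_le_Hs1 eps
    have h3 : Ci / D.h ^ (1-0) * Hs 0 eps ≤ Ci' / D.h * L2 eps := by
      rw [Aux.Hs0_eq, pow_one]
      refine mul_le_mul_of_nonneg_right ?_ (Aux.L2_nonneg eps)
      rw [div_eq_mul_inv, div_eq_mul_inv]
      exact mul_le_mul_of_nonneg_right (le_max_left Ci 1) (inv_nonneg.mpr hh0.le)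
    rw [Aux.Hs0_eq] at h3
    linarith only [h1, h2, h3]
  have f2 : L2 (deriv e) ≤ Ci' / D.h * L2 e := by
    have h1 := (hInv0 e he).1 1 0 (by omega) (by omega)
    rw [Aux.Hs0_eq] at h1
    have h2 : L2 (deriv e) ≤ Hs 1 e := Aux.L2_deriv_le_Hs1 e
    have h3 : Ci / D.h ^ (1-0) * L2 e ≤ Ci' / D.h * L2 e := by
      rw [pow_one]
      refine mul_le_mul_of_nonneg_right ?_ (Aux.L2_nonneg e)
      rw [div_eq_mul_inv, div_eq_mul_inv]
      exact mul_le_mul_of_nonneg_right (le_max_left Ci 1) (inv_nonneg.mpr hh0.le)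
    linarith only [h1, h2, h3]
  have f3 : ∀ x ∈ Icc (0:ℝ) 1, |e x| ≤ Ci' / Real.sqrt D.h * L2 e := by
    have h1 := (hInv0 e he).2 0 (by omega)
    rw [Aux.Winf0_eq] at h1
    have h4 : Ci / (D.h ^ 0 * Real.sqrt D.h) * L2 e ≤ Ci' / Real.sqrt D.h * L2 e := by
      rw [pow_zero, one_mul]
      refine mul_le_mul_of_nonneg_right ?_ (Aux.L2_nonneg e)
      rw [div_eq_mul_inv, div_eq_mul_inv]
      exact mul_le_mul_of_nonneg_right (le_max_left Ci 1) (inv_nonneg.mpr hsh0.le)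
    intro x hx
    exact le_trans (Aux.le_Linf hec hx) (le_trans h1 h4)
  have hLinfη : Linf (η tn) ≤ Kv := Aux.Linf_le (fun x hx => (hbη x hx).1)
  have hLinfu : Linf (u tn) ≤ Ku := Aux.Linf_le (fun x hx => (hbu x hx).1)
  have f4 : ∀ x ∈ Icc (0:ℝ) 1, |P (η tn) x| ≤ CH := by
    have h1 := hPB.2.1 (η tn) hηnc.continuousOn
    have h2 : Cp * Linf (η tn) ≤ Cp' * Kv := by
      calc Cp * Linf (η tn) ≤ Cp' * Linf (η tn) :=
            mul_le_mul_of_nonneg_right (le_max_left Cp 1) (Aux.Linf_nonneg hηnc.continuousOn)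
        _ ≤ Cp' * Kv := mul_le_mul_of_nonneg_left hLinfη hCp'0.le
    intro x hx
    exact le_trans (Aux.le_Linf hHc hx) (le_trans h1 h2)
  have f5 : ∀ x ∈ Icc (0:ℝ) 1, |P0 (u tn) x| ≤ CU := by
    have h1 := hPB0.2.1 (u tn) hunc.continuousOn hun0 hun1
    have h2 : Cp * Linf (u tn) ≤ Cp' * Ku := by
      calc Cp * Linf (u tn) ≤ Cp' * Linf (u tn) :=
            mul_le_mul_of_nonneg_right (le_max_left Cp 1) (Aux.Linf_nonneg hunc.continuousOn)
        _ ≤ Cp' * Ku := mul_le_mul_of_nonneg_left hLinfu hCp'0.le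
    intro x hx
    exact le_trans (Aux.le_Linf hUc hx) (le_trans h1 h2)
  have f6 : ∀ x ∈ Icc (0:ℝ) 1, |P0 (u tn) x - u tn x| ≤ MUC * D.h ^ r := by
    have h1 := hPB0.2.2 (u tn) huncd hun0 hun1
    have h2 : Cp * D.h ^ r * Winf r (u tn) ≤ MUC * D.h ^ r := by
      have h3 : Winf r (u tn) ≤ KWu := hKWu tn htn
      have h4 : 0 ≤ Winf r (u tn) := by
        unfold Winf
        refine Finset.sum_nonneg (fun j _ => ?_)
        exact Aux.Linf_nonneg (by
          exact ((Aux.smooth_partial (hus.of_le (by simp)) j).comp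
            (contDiff_prodMk_right tn)).continuous.continuousOn)
      calc Cp * D.h ^ r * Winf r (u tn) ≤ Cp' * D.h ^ r * Winf r (u tn) := by
            refine mul_le_mul_of_nonneg_right ?_ h4
            exact mul_le_mul_of_nonneg_right (le_max_left Cp 1) (pow_nonneg hh0.le r)
        _ ≤ Cp' * D.h ^ r * KWu := mul_le_mul_of_nonneg_left h3
            (mul_nonneg hCp'0.le (pow_nonneg hh0.le r))
        _ = MUC * D.h ^ r := by rw [hMUCdef]; ring
    intro x hx
    refine le_trans (Aux.le_Linf (hUc.sub hunc.continuousOn) hx) (le_trans ?_ h2)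
    exact h1
  have f7 : ∀ x ∈ Icc (0:ℝ) 1, |P (η tn) x - η tn x| ≤ MHC * D.h ^ r := by
    have h1 := hPB.2.2 (η tn) hηncd
    have h2 : Cp * D.h ^ r * Winf r (η tn) ≤ MHC * D.h ^ r := by
      have h3 : Winf r (η tn) ≤ KWη := hKWη tn htn
      have h4 : 0 ≤ Winf r (η tn) := by
        unfold Winf
        refine Finset.sum_nonneg (fun j _ => ?_)
        exact Aux.Linf_nonneg (by
          exact ((Aux.smooth_partial (hηs.of_le (by simp)) j).comp
            (contDiff_prodMk_right tn)).continuous.continuousOn)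
      calc Cp * D.h ^ r * Winf r (η tn) ≤ Cp' * D.h ^ r * Winf r (η tn) := by
            refine mul_le_mul_of_nonneg_right ?_ h4
            exact mul_le_mul_of_nonneg_right (le_max_left Cp 1) (pow_nonneg hh0.le r)
        _ ≤ Cp' * D.h ^ r * KWη := mul_le_mul_of_nonneg_left h3
            (mul_nonneg hCp'0.le (pow_nonneg hh0.le r))
        _ = MHC * D.h ^ r := by rw [hMHCdef]; ring
    intro x hx
    refine le_trans (Aux.le_Linf (hHc.sub hηnc.continuousOn) hx) (le_trans ?_ h2)
    exact h1
  have hHs0 : ∀ f : ℝ → ℝ, 0 ≤ Hs 1 f := fun f => by unfold Hs; exact Real.sqrt_nonneg _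
  have f8 : L2 (deriv (P (η tn))) ≤ LH := by
    have h1 := hPB.1 (η tn) hηnd1
    have h2 := hK1η tn htn
    have h3 : Cp * Hs 1 (η tn) ≤ Cp' * K1η := by
      calc Cp * Hs 1 (η tn) ≤ Cp' * Hs 1 (η tn) :=
            mul_le_mul_of_nonneg_right (le_max_left Cp 1) (hHs0 _)
        _ ≤ Cp' * K1η := mul_le_mul_of_nonneg_left h2 hCp'0.le
    have h4 : L2 (deriv (P (η tn))) ≤ Hs 1 (P (η tn)) := Aux.L2_deriv_le_Hs1 _
    rw [hLHdef]
    linarith only [h1, h3, h4]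
  have f9 : L2 (deriv (P0 (u tn))) ≤ LU := by
    have h1 := hPB0.1 (u tn) hund1 hun0 hun1
    have h2 := hK1u tn htn
    have h3 : Cp * Hs 1 (u tn) ≤ Cp' * K1u := by
      calc Cp * Hs 1 (u tn) ≤ Cp' * Hs 1 (u tn) :=
            mul_le_mul_of_nonneg_right (le_max_left Cp 1) (hHs0 _)
        _ ≤ Cp' * K1u := mul_le_mul_of_nonneg_left h2 hCp'0.le
    have h4 : L2 (deriv (P0 (u tn))) ≤ Hs 1 (P0 (u tn)) := Aux.L2_deriv_le_Hs1 _
    rw [hLUdef]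
    linarith only [h1, h3, h4]
  have fsa : L2 (fun x => P0 (fun y => (1 + η tn y) * e y) x - (1 + η tn x) * e x)
      ≤ Cs' * D.h * L2 e := by
    have h1 := hSA tn htn e he
    have h2 : Cs * D.h * L2 e ≤ Cs' * D.h * L2 e := by
      refine mul_le_mul_of_nonneg_right ?_ (Aux.L2_nonneg e)
      exact mul_le_mul_of_nonneg_right (le_max_left Cs 1) hh0.le
    linarith only [h1, h2]
  -- projection facts
  have mPρ : Aux.Mb (P (deriv (fun y => (1 + P (η tn) y) * e y + P0 (u tn) y * eps y))) :=
    Aux.mb_of_continuousOn (hP.1 _).1.continuousOn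
  have mPr : Aux.Mb (P0 (deriv (fun y => eps y + P0 (u tn) y * e y))) :=
    Aux.mb_of_continuousOn (hP0.1 _).1.1.continuousOn
  have mgχ : Aux.Mb (P0 (fun y => (1 + η tn y) * e y)) :=
    Aux.mb_of_continuousOn (hP0.1 _).1.1.continuousOn
  have o1 := hP.2.1 (deriv (fun y => (1 + P (η tn) y) * e y + P0 (u tn) y * eps y)) eps heps
  have o2 := hP0.2.1 (deriv (fun y => eps y + P0 (u tn) y * e y))
    (P0 (fun y => (1 + η tn y) * e y)) (hP0.1 _)
  have o3 := hP0.2.1 (deriv (fun y => eps y + P0 (u tn) y * e y))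
    (P0 (deriv (fun y => eps y + P0 (u tn) y * e y))) (hP0.1 _)
  intro Hn Un rp
  exact Aux.core eps e (P (η tn)) (P0 (u tn)) (u tn) (η tn)
    (P (deriv (fun y => (1 + P (η tn) y) * e y + P0 (u tn) y * eps y)))
    (P0 (deriv (fun y => eps y + P0 (u tn) y * e y)))
    (P0 (fun y => (1 + η tn y) * e y))
    D.h cb Ci' Cs' CH CU MUC MHC LH LU Ku Kv r
    hr hh0 hhcb hcb1 hCi'1 hCs'0 hCH0 hCU0 hMUC0 hMHC0 hLH0 hLU0 hKu0 hKv0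
    hεc hεd hKε mε mdε hec hed hKe me mde hHc hHd hKH mH mdH hUc hUd hKU mU mdU
    hunc hund mun mdun hbu hηnc hηnd mηn mdηn hbη
    he0 he1 hU0 hU1 hun0 hun1
    f1 f2 f3 f4 f5 f6 f7 f8 f9 fsa mPρ mPr mgχ o1 o2 o3


end
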